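/- arXiv:1607.03279 — 8 statements merged into one kernel-verified Lean document; each statement's English description precedes it below -/
import Mathlib

section
/- Suppose 0 < α ≤ 1 and f : [0,1] → ℝ satisfies |f(x) − f(y)| ≤ C|x − y|^α for all x, y ∈ [0,1] and some constant C. Then there exists a set A ⊆ [0,1] such that the restriction of f to A is monotone and the Hausdorff dimension of A is at least α. -/
open Set MeasureTheory Filter
open scoped NNReal ENNReal Topology

private lemma holder_on_of_bound (α C : ℝ) (hα0 : 0 < α) (f : ℝ → ℝ)
    (hC : 0 ≤ C)
    (hf : ∀ x ∈ Icc (0:ℝ) 1, ∀ y ∈ Icc (0:ℝ) 1, |f x - f y| ≤ C * |x - y| ^ α) :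
    HolderOnWith C.toNNReal α.toNNReal f (Icc (0:ℝ) 1) := by
  intro x hx y hy
  have h := hf x hx y hy
  have hxy : (0:ℝ) ≤ |x - y| := abs_nonneg _
  calc edist (f x) (f y) = ENNReal.ofReal (dist (f x) (f y)) := (edist_dist _ _)
    _ ≤ ENNReal.ofReal (C * |x - y| ^ α) := by
        apply ENNReal.ofReal_le_ofReal
        simpa [Real.dist_eq] using h
    _ = ENNReal.ofReal C * ENNReal.ofReal (|x - y| ^ α) := by
        rw [ENNReal.ofReal_mul hC]
    _ = (C.toNNReal : ℝ≥0∞) * edist x y ^ (α.toNNReal : ℝ) := by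
        congr 1
        rw [edist_dist, Real.dist_eq,
          ← ENNReal.ofReal_rpow_of_nonneg hxy hα0.le,
          Real.coe_toNNReal α hα0.le]

private lemma aux_mono (α C : ℝ) (hα0 : 0 < α) (hα1 : α ≤ 1) (f : ℝ → ℝ)
    (hC : 0 ≤ C)
    (hf : ∀ x ∈ Icc (0:ℝ) 1, ∀ y ∈ Icc (0:ℝ) 1, |f x - f y| ≤ C * |x - y| ^ α)
    (a b : ℝ) (ha : a ∈ Icc (0:ℝ) 1) (hb : b ∈ Icc (0:ℝ) 1) (hab : a ≤ b)
    (hmin : ∀ x ∈ Icc (0:ℝ) 1, f a ≤ f x)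
    (hmax : ∀ x ∈ Icc (0:ℝ) 1, f x ≤ f b) :
    ∃ A ⊆ Icc (0:ℝ) 1, MonotoneOn f A ∧ ENNReal.ofReal α ≤ dimH A := by
  have hα0' : (0:ℝ≥0) < α.toNNReal := by
    simpa using hα0
  have hholder := holder_on_of_bound α C hα0 f hC hf
  have hcont : ContinuousOn f (Icc (0:ℝ) 1) := hholder.continuousOn hα0'
  by_cases hconst : f b ≤ f a
  · -- f is constant on Icc 0 1
    refine ⟨Icc 0 1, Subset.rfl, ?_, ?_⟩
    · intro x hx y hy _
      exact le_trans (hmax x hx) (le_trans hconst (hmin y hy))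
    · rw [Real.dimH_of_nonempty_interior (s := Icc (0:ℝ) 1)
        (by rw [interior_Icc]; exact ⟨1/2, by norm_num⟩)]
      simp only [Module.finrank_self, Nat.cast_one]
      exact ENNReal.ofReal_le_one.mpr hα1
  push_neg at hconst
  have hIcc : Icc a b ⊆ Icc (0:ℝ) 1 := Icc_subset_Icc ha.1 hb.2
  set A : Set ℝ := {x ∈ Icc a b | ∀ t ∈ Icc a x, f t ≤ f x} with hA
  have hAsub : A ⊆ Icc (0:ℝ) 1 := fun x hx => hIcc hx.1
  have hmono : MonotoneOn f A := fun x hx y hy hxy => hy.2 x ⟨hx.1.1, hxy⟩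
  refine ⟨A, hAsub, hmono, ?_⟩
  -- the image of A covers Icc (f a) (f b)
  have himage : Icc (f a) (f b) ⊆ f '' A := by
    rintro c ⟨hc1, hc2⟩
    set T : Set ℝ := Icc a b ∩ f ⁻¹' Ici c with hT
    have hbT : b ∈ T := ⟨⟨hab, le_refl b⟩, hc2⟩
    have hTne : T.Nonempty := ⟨b, hbT⟩
    have hTbdd : BddBelow T := ⟨a, fun t ht => ht.1.1⟩
    have hTclosed : IsClosed T :=
      (hcont.mono hIcc).preimage_isClosed_of_isClosed isClosed_Icc isClosed_Ici
    set x := sInf T with hx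
    have hxT : x ∈ T := hTclosed.csInf_mem hTne hTbdd
    have hxmem : x ∈ Icc a b := hxT.1
    have hcx : c ≤ f x := hxT.2
    have hlt : ∀ t ∈ Ico a x, f t < c := by
      intro t ht
      by_contra hcon
      push_neg at hcon
      have : t ∈ T := ⟨⟨ht.1, le_trans ht.2.le hxmem.2⟩, hcon⟩
      exact absurd (csInf_le hTbdd this) (not_le.mpr ht.2)
    have hxc : f x = c := by
      rcases eq_or_lt_of_le hxmem.1 with h | h
      · -- x = a
        have : f x ≤ c := h ▸ hc1
        exact le_antisymm this hcx
      · -- a < x : use left limit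
        have hne : (𝓝[Ico a x] x).NeBot := by
          rw [← mem_closure_iff_nhdsWithin_neBot, closure_Ico h.ne]
          exact ⟨hxmem.1, le_refl x⟩
        have htend : Filter.Tendsto f (𝓝[Ico a x] x) (𝓝 (f x)) := by
          have h1 : ContinuousWithinAt f (Icc (0:ℝ) 1) x := hcont x (hIcc hxmem)
          exact (h1.mono (fun t ht => hIcc ⟨ht.1, le_trans ht.2.le hxmem.2⟩)).tendsto
        have hle : f x ≤ c :=
          le_of_tendsto htend (Filter.eventually_of_mem self_mem_nhdsWithin
            fun t ht => (hlt t ht).le)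
        exact le_antisymm hle hcx
    refine ⟨x, ⟨hxmem, ?_⟩, hxc⟩
    intro t ht
    rcases eq_or_lt_of_le ht.2 with h | h
    · exact h ▸ le_refl _
    · exact le_trans (hlt t ⟨ht.1, h⟩).le (hxc ▸ hcx)
  -- dimension estimate
  have hd1 : (1:ℝ≥0∞) ≤ dimH (f '' A) := by
    have : dimH (Icc (f a) (f b)) = 1 := by
      rw [Real.dimH_of_nonempty_interior (s := Icc (f a) (f b))
        (by rw [interior_Icc]; exact nonempty_Ioo.mpr hconst)]
      simp
    calc (1:ℝ≥0∞) = dimH (Icc (f a) (f b)) := this.symm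
      _ ≤ dimH (f '' A) := dimH_mono himage
  have hd2 : dimH (f '' A) ≤ dimH A / (α.toNNReal : ℝ≥0∞) :=
    (hholder.mono hAsub).dimH_image_le hα0'
  have h3 : (1:ℝ≥0∞) ≤ dimH A / ENNReal.ofReal α := by
    have : (α.toNNReal : ℝ≥0∞) = ENNReal.ofReal α := rfl
    rw [← this]
    exact le_trans hd1 hd2
  have hne0 : ENNReal.ofReal α ≠ 0 := by simpa using hα0
  have hnetop : ENNReal.ofReal α ≠ ⊤ := ENNReal.ofReal_ne_top
  calc ENNReal.ofReal α = 1 * ENNReal.ofReal α := (one_mul _).symm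
    _ ≤ dimH A := (ENNReal.le_div_iff_mul_le (Or.inl hne0) (Or.inl hnetop)).mp h3

theorem holder_monotone_restriction (α C : ℝ) (hα0 : 0 < α) (hα1 : α ≤ 1)
    (f : ℝ → ℝ)
    (hf : ∀ x ∈ Icc (0:ℝ) 1, ∀ y ∈ Icc (0:ℝ) 1, |f x - f y| ≤ C * |x - y| ^ α) :
    ∃ A ⊆ Icc (0:ℝ) 1, (MonotoneOn f A ∨ AntitoneOn f A) ∧
      ENNReal.ofReal α ≤ dimH A := by
  have h01 : (0:ℝ) ∈ Icc (0:ℝ) 1 := by norm_num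
  have h11 : (1:ℝ) ∈ Icc (0:ℝ) 1 := by norm_num
  have hC : 0 ≤ C := by
    have h := hf 0 h01 1 h11
    have : |(0:ℝ) - 1| ^ α = 1 := by norm_num
    rw [this, mul_one] at h
    exact le_trans (abs_nonneg _) h
  have hα0' : (0:ℝ≥0) < α.toNNReal := by simpa using hα0
  have hholder := holder_on_of_bound α C hα0 f hC hf
  have hcont : ContinuousOn f (Icc (0:ℝ) 1) := hholder.continuousOn hα0'
  obtain ⟨a, haI, hamin⟩ := isCompact_Icc.exists_isMinOn (nonempty_Icc.mpr zero_le_one) hcont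
  obtain ⟨b, hbI, hbmax⟩ := isCompact_Icc.exists_isMaxOn (nonempty_Icc.mpr zero_le_one) hcont
  rcases le_total a b with hab | hab
  · obtain ⟨A, hA1, hA2, hA3⟩ := aux_mono α C hα0 hα1 f hC hf a b haI hbI hab
      (fun x hx => hamin hx) (fun x hx => hbmax hx)
    exact ⟨A, hA1, Or.inl hA2, hA3⟩
  · have hf' : ∀ x ∈ Icc (0:ℝ) 1, ∀ y ∈ Icc (0:ℝ) 1,
        |(-f) x - (-f) y| ≤ C * |x - y| ^ α := by
      intro x hx y hy
      have hh := hf x hx y hy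
      have : (-f) x - (-f) y = f y - f x := by simp [sub_eq_add_neg]; ring
      rw [this, abs_sub_comm]
      exact hh
    obtain ⟨A, hA1, hA2, hA3⟩ := aux_mono α C hα0 hα1 (-f) hC hf' b a hbI haI hab
      (fun x hx => by simpa using hbmax hx) (fun x hx => by simpa using hamin hx)
    refine ⟨A, hA1, Or.inr ?_, hA3⟩
    intro x hx y hy hxy
    have := hA2 hx hy hxy
    simpa using this
end

section
/- Let f : [a,b] → ℝ be continuous, let E be the convex hull of {(x,y) : x ∈ [a,b], y ≥ f(x)}, and let g(x) = min{y : (x,y) ∈ E}. Then g is convex on [a,b], g ≤ f, g(a) = f(a), g(b) = f(b), and g is affine on every open interval contiguous to the contact set A = {x : g(x) = f(x)}. -/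
/-!
The convex hull of the epigraph of `f` is the epigraph of the largest convex minorant `g` of
`f`: every convex `h ≤ f` has a convex epigraph containing that of `f`, hence containing the hull.
At an endpoint of `[a, b]`, continuity of `f` lets one slide an affine function of steep slope
below `f` while keeping it within `ε` of `f` at the endpoint, so `g = f` there. On a gap
`(x₁, x₂)` of the contact set, `g` lies below its chord `L` and above the prolongation of `L`
outside `[x₁, x₂]`. Lowering `L` until it touches `f` on `[x₁, x₂]` gives an affine minorant of
`f`, hence of `g`; if the lowering were strict, the touching point would be a contact point inside
the gap. So `L` itself is a minorant of `g` on `[x₁, x₂]`, and `g = L` there.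
-/

open Set

section ConvexMinorant

variable {E : Type*} [AddCommGroup E] [Module ℝ E] {s : Set E} {f h : E → ℝ} {x : E}

def epigraphOn (s : Set E) (f : E → ℝ) : Set (E × ℝ) :=
  {p | p.1 ∈ s ∧ f p.1 ≤ p.2}

noncomputable def convexMinorant (s : Set E) (f : E → ℝ) (x : E) : ℝ :=
  sInf {y | (x, y) ∈ convexHull ℝ (epigraphOn s f)}

theorem convexHull_epigraphOn_subset (hh : ConvexOn ℝ s h) (hhf : ∀ x ∈ s, h x ≤ f x) :
    convexHull ℝ (epigraphOn s f) ⊆ epigraphOn s h :=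
  convexHull_min (fun _ hp => ⟨hp.1, (hhf _ hp.1).trans hp.2⟩) hh.convex_epigraph

theorem mk_mem_convexHull_epigraphOn (hx : x ∈ s) : (x, f x) ∈ convexHull ℝ (epigraphOn s f) :=
  subset_convexHull ℝ _ ⟨hx, le_rfl⟩

theorem bddBelow_fiber_convexHull_epigraphOn (hs : Convex ℝ s) (hbdd : BddBelow (f '' s))
    (x : E) : BddBelow {y | (x, y) ∈ convexHull ℝ (epigraphOn s f)} := by
  obtain ⟨m, hm⟩ := hbdd
  exact ⟨m, fun y hy =>
    (convexHull_epigraphOn_subset (convexOn_const m hs) (fun z hz => hm ⟨z, hz, rfl⟩) hy).2⟩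

theorem convexMinorant_le (hs : Convex ℝ s) (hbdd : BddBelow (f '' s)) (hx : x ∈ s) :
    convexMinorant s f x ≤ f x :=
  csInf_le (bddBelow_fiber_convexHull_epigraphOn hs hbdd x) (mk_mem_convexHull_epigraphOn hx)

theorem le_convexMinorant (hh : ConvexOn ℝ s h) (hhf : ∀ x ∈ s, h x ≤ f x) (hx : x ∈ s) :
    h x ≤ convexMinorant s f x :=
  le_csInf ⟨f x, mk_mem_convexHull_epigraphOn hx⟩ fun _ hy =>
    (convexHull_epigraphOn_subset hh hhf hy).2

theorem convexOn_convexMinorant (hs : Convex ℝ s) (hbdd : BddBelow (f '' s)) :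
    ConvexOn ℝ s (convexMinorant s f) := by
  refine ⟨hs, fun x hx y hy θ η hθ hη hθη => le_of_forall_pos_le_add fun ε hε => ?_⟩
  obtain ⟨u, hu, hux⟩ := exists_lt_of_csInf_lt ⟨f x, mk_mem_convexHull_epigraphOn hx⟩
    (lt_add_of_pos_right (convexMinorant s f x) hε)
  obtain ⟨v, hv, hvy⟩ := exists_lt_of_csInf_lt ⟨f y, mk_mem_convexHull_epigraphOn hy⟩
    (lt_add_of_pos_right (convexMinorant s f y) hε)
  have hmem := convex_convexHull ℝ (epigraphOn s f) hu hv hθ hη hθη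
  simp only [Prod.smul_mk, Prod.mk_add_mk] at hmem
  calc convexMinorant s f (θ • x + η • y)
      ≤ θ • u + η • v := csInf_le (bddBelow_fiber_convexHull_epigraphOn hs hbdd _) hmem
    _ ≤ θ • (convexMinorant s f x + ε) + η • (convexMinorant s f y + ε) := by
        gcongr
    _ = θ • convexMinorant s f x + η • convexMinorant s f y + ε := by
        simp only [smul_eq_mul]; linear_combination ε * hθη

theorem convexMinorant_eq_of_forall_exists (hs : Convex ℝ s) (hbdd : BddBelow (f '' s))
    (hx : x ∈ s)
    (happrox : ∀ ε > 0, ∃ h, ConvexOn ℝ s h ∧ (∀ z ∈ s, h z ≤ f z) ∧ f x - ε ≤ h x) :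
    convexMinorant s f x = f x := by
  refine (convexMinorant_le hs hbdd hx).antisymm (le_of_forall_pos_le_add fun ε hε => ?_)
  obtain ⟨h, hh, hhf, hεx⟩ := happrox ε hε
  linarith [le_convexMinorant hh hhf hx]

end ConvexMinorant

theorem LowerSemicontinuousWithinAt.exists_forall_sub_mul_dist_le {X : Type*}
    [PseudoMetricSpace X] {s : Set X} {f : X → ℝ} {a : X} (hf : LowerSemicontinuousWithinAt f s a)
    (hbdd : BddBelow (f '' s)) {ε : ℝ} (hε : 0 < ε) :
    ∃ C, ∀ x ∈ s, f a - ε - C * dist x a ≤ f x := by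
  obtain ⟨m, hm⟩ := hbdd
  obtain ⟨δ, hδ, hnear⟩ := Metric.mem_nhdsWithin_iff.1 (hf (f a - ε) (by linarith))
  set C := max 0 ((f a - m) / δ)
  refine ⟨C, fun x hx => ?_⟩
  have hmx : m ≤ f x := hm ⟨x, hx, rfl⟩
  have hC : 0 ≤ C := le_max_left _ _
  rcases lt_or_ge (dist x a) δ with hclose | hfar
  · have : f a - ε < f x := hnear ⟨hclose, hx⟩
    nlinarith [dist_nonneg (x := x) (y := a)]
  · have : f a - m ≤ C * dist x a :=
      calc f a - m = (f a - m) / δ * δ := by field_simp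
        _ ≤ C * dist x a := mul_le_mul (le_max_right _ _) hfar hδ.le hC
    linarith

section Slope

variable {𝕜 : Type*} [Field 𝕜] [LinearOrder 𝕜] [IsStrictOrderedRing 𝕜] {s : Set 𝕜}
  {g : 𝕜 → 𝕜} {x₁ x₂ z : 𝕜}

theorem convexOn_add_mul_sub (hs : Convex 𝕜 s) (c k x₀ : 𝕜) :
    ConvexOn 𝕜 s fun z => c + k * (z - x₀) :=
  ⟨hs, fun x _ y _ θ η _ _ hθη => by
    simp only [smul_eq_mul]; exact le_of_eq (by linear_combination (k * x₀ - c) * hθη)⟩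

theorem ConvexOn.le_add_slope_mul_sub (hg : ConvexOn 𝕜 s g) (hx₁ : x₁ ∈ s) (hx₂ : x₂ ∈ s)
    (hz : z ∈ Icc x₁ x₂) : g z ≤ g x₁ + slope g x₁ x₂ * (z - x₁) := by
  rcases hz.1.eq_or_lt with rfl | hz₁
  · simp
  have hzs : z ∈ s := hg.1.ordConnected.out hx₁ hx₂ hz
  have hslope : slope g x₁ z ≤ slope g x₁ x₂ :=
    hg.slope_mono hx₁ ⟨hzs, hz₁.ne'⟩ ⟨hx₂, (hz₁.trans_le hz.2).ne'⟩ hz.2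
  have hgz : (z - x₁) * slope g x₁ z + g x₁ = g z := sub_smul_slope_vadd g x₁ z
  nlinarith [sub_pos.2 hz₁]

theorem ConvexOn.add_slope_mul_sub_le (hg : ConvexOn 𝕜 s g) (hx₁ : x₁ ∈ s) (hx₂ : x₂ ∈ s)
    (hz : z ∈ s) (hlt : x₁ < x₂) (hout : z ∉ Ioo x₁ x₂) :
    g x₁ + slope g x₁ x₂ * (z - x₁) ≤ g z := by
  have hgz : (z - x₁) * slope g x₁ z + g x₁ = g z := sub_smul_slope_vadd g x₁ z
  rcases lt_trichotomy z x₁ with hz₁ | rfl | hz₁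
  · have hslope : slope g x₁ z ≤ slope g x₁ x₂ :=
      hg.slope_mono hx₁ ⟨hz, hz₁.ne⟩ ⟨hx₂, hlt.ne'⟩ (hz₁.trans hlt).le
    nlinarith [sub_neg.2 hz₁]
  · simp
  · have hz₂ : x₂ ≤ z := not_lt.1 fun h => hout ⟨hz₁, h⟩
    have hslope : slope g x₁ x₂ ≤ slope g x₁ z :=
      hg.slope_mono hx₁ ⟨hx₂, hlt.ne'⟩ ⟨hz, hz₁.ne'⟩ hz₂
    nlinarith [sub_pos.2 hz₁]

end Slope

section Interval

variable {s : Set ℝ} {f : ℝ → ℝ}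

theorem convexMinorant_eq_of_isLeast {a : ℝ} (hs : Convex ℝ s) (ha : IsLeast s a)
    (hf : LowerSemicontinuousWithinAt f s a) (hbdd : BddBelow (f '' s)) :
    convexMinorant s f a = f a := by
  refine convexMinorant_eq_of_forall_exists hs hbdd ha.1 fun ε hε => ?_
  obtain ⟨C, hC⟩ := hf.exists_forall_sub_mul_dist_le hbdd hε
  refine ⟨fun z => (f a - ε) + -C * (z - a), convexOn_add_mul_sub hs _ _ _, fun z hz => ?_,
    by simp⟩
  have := hC z hz
  rw [Real.dist_eq, abs_of_nonneg (sub_nonneg.2 (ha.2 hz))] at this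
  linarith

theorem convexMinorant_eq_of_isGreatest {b : ℝ} (hs : Convex ℝ s) (hb : IsGreatest s b)
    (hf : LowerSemicontinuousWithinAt f s b) (hbdd : BddBelow (f '' s)) :
    convexMinorant s f b = f b := by
  refine convexMinorant_eq_of_forall_exists hs hbdd hb.1 fun ε hε => ?_
  obtain ⟨C, hC⟩ := hf.exists_forall_sub_mul_dist_le hbdd hε
  refine ⟨fun z => (f b - ε) + C * (z - b), convexOn_add_mul_sub hs _ _ _, fun z hz => ?_,
    by simp⟩
  have := hC z hz
  rw [Real.dist_eq, abs_of_nonpos (sub_nonpos.2 (hb.2 hz))] at this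
  linarith

theorem convexMinorant_eqOn_chord {x₁ x₂ : ℝ} (hs : Convex ℝ s) (hbdd : BddBelow (f '' s))
    (hx₁ : x₁ ∈ s) (hx₂ : x₂ ∈ s) (hlt : x₁ < x₂) (hf : ContinuousOn f (Icc x₁ x₂))
    (hc₁ : convexMinorant s f x₁ = f x₁) (hc₂ : convexMinorant s f x₂ = f x₂)
    (hgap : ∀ z ∈ Ioo x₁ x₂, convexMinorant s f z ≠ f z) :
    EqOn (convexMinorant s f)
      (fun z => convexMinorant s f x₁ + slope (convexMinorant s f) x₁ x₂ * (z - x₁))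
      (Icc x₁ x₂) := by
  set g := convexMinorant s f
  set k := slope g x₁ x₂
  have hg : ConvexOn ℝ s g := convexOn_convexMinorant hs hbdd
  have hIcc : Icc x₁ x₂ ⊆ s := hs.ordConnected.out hx₁ hx₂
  have hk : (x₂ - x₁) * k + g x₁ = g x₂ := sub_smul_slope_vadd g x₁ x₂
  obtain ⟨w, hw, hwmin⟩ := isCompact_Icc.exists_isMinOn (nonempty_Icc.2 hlt.le)
    (hf.sub (by fun_prop : Continuous fun z => g x₁ + k * (z - x₁)).continuousOn)
  set m := min (f w - (g x₁ + k * (w - x₁))) 0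
  have hlower_f : ∀ z ∈ s, g x₁ + m + k * (z - x₁) ≤ f z := by
    intro z hz
    by_cases hzI : z ∈ Ioo x₁ x₂
    · have := isMinOn_iff.1 hwmin z (Ioo_subset_Icc_self hzI)
      simp only [Pi.sub_apply] at this
      linarith [min_le_left (f w - (g x₁ + k * (w - x₁))) 0]
    · linarith [hg.add_slope_mul_sub_le hx₁ hx₂ hz hlt hzI, convexMinorant_le hs hbdd hz,
        min_le_right (f w - (g x₁ + k * (w - x₁))) 0]
  have hlower_g : ∀ z ∈ s, g x₁ + m + k * (z - x₁) ≤ g z := fun z hz =>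
    le_convexMinorant (convexOn_add_mul_sub hs _ _ _) hlower_f hz
  have hm : m = 0 := by
    by_contra hm
    have hneg : f w - (g x₁ + k * (w - x₁)) < 0 := not_le.1 fun h => hm (min_eq_right h)
    have hmw : m = f w - (g x₁ + k * (w - x₁)) := min_eq_left hneg.le
    have hcontact : g w = f w :=
      (convexMinorant_le hs hbdd (hIcc hw)).antisymm (by linarith [hlower_g w (hIcc hw)])
    have hw₁ : w ≠ x₁ := by
      rintro rfl
      linarith
    have hw₂ : w ≠ x₂ := by
      rintro rfl
      linarith
    exact hgap w ⟨hw.1.lt_of_ne hw₁.symm, hw.2.lt_of_ne hw₂⟩ hcontact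
  intro z hz
  exact (hg.le_add_slope_mul_sub hx₁ hx₂ hz).antisymm (by simpa [hm] using hlower_g z (hIcc hz))

end Interval

theorem convex_minorant_properties (a b : ℝ) (hab : a < b)
    (f : ℝ → ℝ) (hf : ContinuousOn f (Icc a b))
    (g : ℝ → ℝ)
    (hg : ∀ x ∈ Icc a b,
      g x = sInf {y : ℝ | ((x, y) : ℝ × ℝ) ∈
        convexHull ℝ {p : ℝ × ℝ | p.1 ∈ Icc a b ∧ f p.1 ≤ p.2}}) :
    ConvexOn ℝ (Icc a b) g ∧ (∀ x ∈ Icc a b, g x ≤ f x) ∧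
      g a = f a ∧ g b = f b ∧
      (∀ x₁ ∈ {x ∈ Icc a b | g x = f x}, ∀ x₂ ∈ {x ∈ Icc a b | g x = f x},
        x₁ < x₂ → Ioo x₁ x₂ ∩ {x ∈ Icc a b | g x = f x} = ∅ →
        ∀ x ∈ Ioo x₁ x₂,
          g x = g x₁ + (g x₂ - g x₁) / (x₂ - x₁) * (x - x₁)) := by
  have hgm : EqOn g (convexMinorant (Icc a b) f) (Icc a b) := hg
  have hs : Convex ℝ (Icc a b) := convex_Icc a b
  have hbdd : BddBelow (f '' Icc a b) := isCompact_Icc.bddBelow_image hf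
  have ha : a ∈ Icc a b := left_mem_Icc.2 hab.le
  have hb : b ∈ Icc a b := right_mem_Icc.2 hab.le
  refine ⟨(convexOn_convexMinorant hs hbdd).congr hgm.symm,
    fun x hx => hgm hx ▸ convexMinorant_le hs hbdd hx, ?_, ?_, ?_⟩
  · rw [hgm ha]
    exact convexMinorant_eq_of_isLeast hs (isLeast_Icc hab.le)
      (hf a ha).lowerSemicontinuousWithinAt hbdd
  · rw [hgm hb]
    exact convexMinorant_eq_of_isGreatest hs (isGreatest_Icc hab.le)
      (hf b hb).lowerSemicontinuousWithinAt hbdd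
  rintro x₁ ⟨hx₁, hc₁⟩ x₂ ⟨hx₂, hc₂⟩ hlt hempty x hx
  have hgap : ∀ z ∈ Ioo x₁ x₂, convexMinorant (Icc a b) f z ≠ f z := fun z hz hcontact => by
    have hzs : z ∈ Icc a b := ⟨hx₁.1.trans hz.1.le, hz.2.le.trans hx₂.2⟩
    exact (hempty ▸ ⟨hz, hzs, (hgm hzs).trans hcontact⟩ : z ∈ (∅ : Set ℝ))
  have hchord := convexMinorant_eqOn_chord hs hbdd hx₁ hx₂ hlt
    (hf.mono (Icc_subset_Icc hx₁.1 hx₂.2)) (hgm hx₁ ▸ hc₁) (hgm hx₂ ▸ hc₂) hgap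
    (Ioo_subset_Icc_self hx)
  rw [hgm (hs.ordConnected.out hx₁ hx₂ (Ioo_subset_Icc_self hx)), hgm hx₁, hgm hx₂, hchord,
    slope_def_field]
end

section
/- Suppose 1 < α < 2 and f ∈ C^α[0,1], i.e., f is differentiable with |f'(x) − f'(y)| ≤ L|x − y|^{α−1} for all x, y ∈ [0,1]. Let g be the convex minorant of f on [0,1] (the lower boundary of the convex hull of the epigraph of f). Then g is differentiable and g' satisfies |g'(x) − g'(y)| ≤ L|x − y|^{α−1} for all x, y ∈ [0,1]; in particular g ∈ C^α[0,1]. -/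
/-!
Off the intervals `[u, v]` over which `g` is a chord of `f` supporting `f` on `[0, 1]`, `g = f`;
such a chord through a given `x` is found by minimising over `a ≤ x ≤ b` the value at `x` of the
chord over `[a, b]`. An endpoint of a supporting chord inside `(0, 1)` is a local minimum of
`f - chord`, so there `f'` is the slope of the chord. Hence `g` is differentiable, with `g' = f'`
off the chords and `g'` the slope on a chord, and the Taylor bound
`|f t - f s - f' s (t - s)| ≤ L |t - s| ^ α` passes to `g`. For `x < y` not on a common chord,
`g' x = f' p` and `g' y = f' q` with `p, q ∈ [x, y]`, which gives the Hölder bound for `g'` with the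
same constant `L`.
-/

open Set Filter Topology

noncomputable def chord (f : ℝ → ℝ) (a b x : ℝ) : ℝ := f a + slope f a b * (x - a)

theorem chord_left (f : ℝ → ℝ) (a b : ℝ) : chord f a b a = f a := by simp [chord]

theorem chord_right (f : ℝ → ℝ) {a b : ℝ} (hab : a ≠ b) : chord f a b b = f b := by
  rw [chord, slope_def_field, div_mul_cancel₀ _ (sub_ne_zero.2 hab.symm)]
  ring

theorem chord_eq_add (f : ℝ → ℝ) (a b p x : ℝ) :
    chord f a b x = chord f a b p + slope f a b * (x - p) := by
  simp only [chord]; ring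

theorem min_le_chord (f : ℝ → ℝ) {a b x : ℝ} (hax : a ≤ x) (hxb : x ≤ b) :
    min (f a) (f b) ≤ chord f a b x := by
  rcases le_total (f a) (f b) with h | h
  · have : 0 ≤ slope f a b := by rw [slope_def_field]; exact div_nonneg (by linarith) (by linarith)
    have : 0 ≤ slope f a b * (x - a) := mul_nonneg this (by linarith)
    rw [chord]; linarith [min_le_left (f a) (f b)]
  · rcases hax.eq_or_lt with rfl | hax
    · rw [chord_left]; exact min_le_left _ _
    have : slope f a b ≤ 0 := by
      rw [slope_def_field]; exact div_nonpos_of_nonpos_of_nonneg (by linarith) (by linarith)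
    have : 0 ≤ slope f a b * (x - b) := mul_nonneg_of_nonpos_of_nonpos this (by linarith)
    rw [chord_eq_add f a b b, chord_right f (hax.trans_le hxb).ne]
    linarith [min_le_right (f a) (f b)]

theorem le_chord_iff_slope_le (f : ℝ → ℝ) {a b x : ℝ} (hax : a < x) (hxb : x < b) :
    f x ≤ chord f a b x ↔ slope f a x ≤ slope f x b := by
  rw [chord, slope_def_field, slope_def_field, slope_def_field,
    div_le_div_iff₀ (sub_pos.2 hax) (sub_pos.2 hxb), div_mul_eq_mul_div, ← sub_le_iff_le_add',
    le_div_iff₀ (by linarith)]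
  constructor <;> intro h <;> nlinarith

theorem exists_line_le_of_slope_le {f : ℝ → ℝ} {x : ℝ} (hx : x ∈ Ioo (0:ℝ) 1)
    (h : ∀ a ∈ Ico 0 x, ∀ b ∈ Ioc x 1, slope f a x ≤ slope f x b) :
    ∃ s, ∀ t ∈ Icc (0:ℝ) 1, f x + s * (t - x) ≤ f t := by
  set S := (slope f · x) '' Ico 0 x
  have hne : S.Nonempty := ⟨_, mem_image_of_mem _ ⟨le_rfl, hx.1⟩⟩
  have hbdd : BddAbove S := ⟨slope f x 1, forall_mem_image.2 fun a ha => h a ha 1 ⟨hx.2, le_rfl⟩⟩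
  refine ⟨sSup S, fun t ht => ?_⟩
  rcases lt_trichotomy t x with htx | rfl | hxt
  · have hle : slope f t x ≤ sSup S := le_csSup hbdd (mem_image_of_mem _ ⟨ht.1, htx⟩)
    have hsl : (x - t) * slope f t x = f x - f t := sub_smul_slope f t x
    nlinarith
  · simp
  · have hle : sSup S ≤ slope f x t :=
      csSup_le hne (forall_mem_image.2 fun a ha => h a ha t ⟨hxt, ht.2⟩)
    have hsl : (t - x) * slope f x t = f t - f x := sub_smul_slope f x t
    nlinarith

theorem HasDerivAt.eq_of_eventually_line_le {f : ℝ → ℝ} {f'p p s : ℝ} (hf : HasDerivAt f f'p p)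
    (h : ∀ᶠ t in 𝓝 p, f p + s * (t - p) ≤ f t) : f'p = s := by
  have hmin : IsLocalMin (fun t => f t - s * (t - p)) p :=
    h.mono fun t ht => by simp only [sub_self, mul_zero, sub_zero]; linarith
  have hd : HasDerivAt (fun t => f t - s * (t - p)) (f'p - s * 1) p :=
    hf.sub (((hasDerivAt_id p).sub_const p).const_mul s)
  linarith [hmin.hasDerivAt_eq_zero hd]

theorem hasDerivWithinAt_of_abs_sub_sub_le {g : ℝ → ℝ} {s : Set ℝ} {x σ C β : ℝ} (hβ : 0 < β)
    (h : ∀ t ∈ s, |g t - g x - σ * (t - x)| ≤ C * |t - x| ^ β * |t - x|) :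
    HasDerivWithinAt g σ s x := by
  rw [hasDerivWithinAt_iff_isLittleO, Asymptotics.isLittleO_iff]
  intro ε hε
  have hcont : ContinuousAt (fun t => C * |t - x| ^ β) x := by
    fun_prop (disch := exact Or.inr hβ.le)
  have hlim : Tendsto (fun t => C * |t - x| ^ β) (𝓝[s] x) (𝓝 0) := by
    simpa [Real.zero_rpow hβ.ne'] using hcont.tendsto.mono_left nhdsWithin_le_nhds
  filter_upwards [hlim.eventually (gt_mem_nhds hε), self_mem_nhdsWithin] with t hCt ht
  rw [smul_eq_mul, mul_comm, Real.norm_eq_abs, Real.norm_eq_abs]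
  exact (h t ht).trans (mul_le_mul_of_nonneg_right hCt.le (abs_nonneg _))

structure HasHolderDeriv (f f' : ℝ → ℝ) (L β : ℝ) : Prop where
  hasDerivWithinAt : ∀ x ∈ Icc (0:ℝ) 1, HasDerivWithinAt f (f' x) (Icc 0 1) x
  abs_sub_le : ∀ x ∈ Icc (0:ℝ) 1, ∀ y ∈ Icc (0:ℝ) 1, |f' x - f' y| ≤ L * |x - y| ^ β

namespace HasHolderDeriv

variable {f f' : ℝ → ℝ} {L β : ℝ}

theorem nonneg (hf : HasHolderDeriv f f' L β) : 0 ≤ L := by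
  have h := hf.abs_sub_le 0 (left_mem_Icc.2 zero_le_one) 1 (right_mem_Icc.2 zero_le_one)
  norm_num at h
  exact (abs_nonneg _).trans h

theorem continuousOn (hf : HasHolderDeriv f f' L β) : ContinuousOn f (Icc 0 1) :=
  fun x hx => (hf.hasDerivWithinAt x hx).continuousWithinAt

theorem abs_sub_sub_le (hf : HasHolderDeriv f f' L β) (hβ : 0 ≤ β) {s t : ℝ}
    (hs : s ∈ Icc (0:ℝ) 1) (ht : t ∈ Icc (0:ℝ) 1) :
    |f t - f s - f' s * (t - s)| ≤ L * |t - s| ^ β * |t - s| := by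
  have hsub : uIcc s t ⊆ Icc 0 1 := uIcc_subset_Icc hs ht
  have hderiv : ∀ y ∈ uIcc s t,
      HasDerivWithinAt (fun y => f y - f' s * y) (f' y - f' s) (uIcc s t) y := fun y hy =>
    ((hf.hasDerivWithinAt y (hsub hy)).mono hsub).sub
      ((hasDerivWithinAt_id y _).const_mul (f' s) |>.congr_deriv (mul_one _))
  have hbound : ∀ y ∈ uIcc s t, ‖f' y - f' s‖ ≤ L * |t - s| ^ β := fun y hy => by
    calc ‖f' y - f' s‖ ≤ L * |y - s| ^ β := hf.abs_sub_le y (hsub hy) s hs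
      _ ≤ L * |t - s| ^ β := by
        have := hf.nonneg
        gcongr L * ?_ ^ β
        exact abs_sub_left_of_mem_uIcc hy
  have := convex_uIcc s t |>.norm_image_sub_le_of_norm_hasDerivWithin_le hderiv hbound
    left_mem_uIcc right_mem_uIcc
  simp only [Real.norm_eq_abs] at this
  convert this using 2
  ring

theorem abs_tangent_sub_tangent_le (hf : HasHolderDeriv f f' L β) (hβ : 0 ≤ β) {x t p : ℝ}
    (hx : x ∈ Icc (0:ℝ) 1) (ht : t ∈ Icc (0:ℝ) 1) (hp : p ∈ uIcc x t) :
    |f p + f' p * (t - p) - (f x + f' x * (t - x))| ≤ L * |t - x| ^ β * |t - x| := by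
  have hpI : p ∈ Icc (0:ℝ) 1 := uIcc_subset_Icc hx ht hp
  have hdist : |p - x| + |t - p| = |t - x| := by
    have := dist_add_dist_of_mem_segment (segment_eq_uIcc x t ▸ hp)
    simpa [Real.dist_eq, abs_sub_comm] using this
  have hpx : |p - x| ≤ |t - x| := abs_sub_left_of_mem_uIcc hp
  calc |f p + f' p * (t - p) - (f x + f' x * (t - x))|
      = |(f p - f x - f' x * (p - x)) + (f' p - f' x) * (t - p)| := by ring_nf
    _ ≤ L * |p - x| ^ β * |p - x| + L * |p - x| ^ β * |t - p| := by
        grw [abs_add_le, abs_mul, hf.abs_sub_sub_le hβ hx hpI, hf.abs_sub_le p hpI x hx]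
    _ = L * |p - x| ^ β * |t - x| := by rw [← hdist]; ring
    _ ≤ L * |t - x| ^ β * |t - x| := by
        have := hf.nonneg
        gcongr

end HasHolderDeriv

theorem line_le_of_mem_convexHull {f : ℝ → ℝ} {x₀ y₀ s x y : ℝ}
    (h : ∀ t ∈ Icc (0:ℝ) 1, y₀ + s * (t - x₀) ≤ f t)
    (hxy : (x, y) ∈ convexHull ℝ {p : ℝ × ℝ | p.1 ∈ Icc (0:ℝ) 1 ∧ f p.1 ≤ p.2}) :
    y₀ + s * (x - x₀) ≤ y := by
  have hconv : Convex ℝ {p : ℝ × ℝ | y₀ + s * (p.1 - x₀) ≤ p.2} := by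
    intro p hp q hq a b ha hb hab
    obtain rfl : b = 1 - a := by linarith
    simp only [mem_ofPred_eq, Prod.fst_add, Prod.snd_add, Prod.smul_fst, Prod.smul_snd,
      smul_eq_mul] at hp hq ⊢
    nlinarith [mul_le_mul_of_nonneg_left hp ha, mul_le_mul_of_nonneg_left hq hb]
  exact convexHull_min (fun p hp => (h p.1 hp.1).trans hp.2) hconv hxy

theorem chord_mem_convexHull (f : ℝ → ℝ) {u v t : ℝ} (hu : u ∈ Icc (0:ℝ) 1)
    (hv : v ∈ Icc (0:ℝ) 1) (huv : u < v) (ht : t ∈ Icc u v) :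
    (t, chord f u v t) ∈ convexHull ℝ {p : ℝ × ℝ | p.1 ∈ Icc (0:ℝ) 1 ∧ f p.1 ≤ p.2} := by
  have hvu : v - u ≠ 0 := sub_ne_zero.2 huv.ne'
  have hθ : (t - u) / (v - u) ∈ Icc (0:ℝ) 1 :=
    ⟨div_nonneg (by linarith [ht.1]) (by linarith),
      div_le_one_of_le₀ (by linarith [ht.2]) (by linarith)⟩
  have := (convex_convexHull ℝ {p : ℝ × ℝ | p.1 ∈ Icc (0:ℝ) 1 ∧ f p.1 ≤ p.2}).add_smul_sub_mem
    (x := (u, f u)) (y := (v, f v)) (subset_convexHull ℝ _ ⟨hu, le_rfl⟩)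
    (subset_convexHull ℝ _ ⟨hv, le_rfl⟩) hθ
  convert this using 1
  ext
  · simp only [Prod.fst_add, Prod.smul_fst, Prod.fst_sub, smul_eq_mul]
    field_simp; ring
  · simp only [chord, slope_def_field, Prod.snd_add, Prod.smul_snd, Prod.snd_sub, smul_eq_mul]
    ring

/-- The properties of the lower boundary `g` of the convex hull of the epigraph of `f` over `[0, 1]`
that the argument uses. -/
structure IsConvexMinorant (f g : ℝ → ℝ) : Prop where
  le : ∀ x ∈ Icc (0:ℝ) 1, g x ≤ f x
  le_chord : ∀ u ∈ Icc (0:ℝ) 1, ∀ v ∈ Icc (0:ℝ) 1, u < v → ∀ t ∈ Icc u v, g t ≤ chord f u v t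
  line_le : ∀ x₀ y₀ s : ℝ, (∀ t ∈ Icc (0:ℝ) 1, y₀ + s * (t - x₀) ≤ f t) →
    ∀ t ∈ Icc (0:ℝ) 1, y₀ + s * (t - x₀) ≤ g t

theorem isConvexMinorant_of_eq_sInf {f g : ℝ → ℝ} (hf : ContinuousOn f (Icc 0 1))
    (hg : ∀ x ∈ Icc (0:ℝ) 1, g x = sInf {y : ℝ | ((x, y) : ℝ × ℝ) ∈
      convexHull ℝ {p : ℝ × ℝ | p.1 ∈ Icc (0:ℝ) 1 ∧ f p.1 ≤ p.2}}) :
    IsConvexMinorant f g := by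
  obtain ⟨m, hm⟩ := isCompact_Icc.bddBelow_image hf
  have hbdd (x : ℝ) : BddBelow {y : ℝ | ((x, y) : ℝ × ℝ) ∈
      convexHull ℝ {p : ℝ × ℝ | p.1 ∈ Icc (0:ℝ) 1 ∧ f p.1 ≤ p.2}} :=
    ⟨m, fun y hy => by
      simpa using line_le_of_mem_convexHull (x₀ := 0) (s := 0)
        (fun t ht => by simpa using hm (mem_image_of_mem f ht)) hy⟩
  refine ⟨fun x hx => ?_, fun u hu v hv huv t ht => ?_, fun x₀ y₀ s h t ht => ?_⟩
  · rw [hg x hx]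
    exact csInf_le (hbdd x) (subset_convexHull ℝ _ ⟨hx, le_rfl⟩)
  · rw [hg t ⟨hu.1.trans ht.1, ht.2.trans hv.2⟩]
    exact csInf_le (hbdd t) (chord_mem_convexHull f hu hv huv ht)
  · rw [hg t ht]
    exact le_csInf ⟨f t, subset_convexHull ℝ _ ⟨ht, le_rfl⟩⟩
      fun y hy => line_le_of_mem_convexHull h hy

theorem exists_minimal_chord {f : ℝ → ℝ} (hf : ContinuousOn f (Icc 0 1)) {x a b : ℝ}
    (hx : x ∈ Icc (0:ℝ) 1) (ha : a ∈ Icc 0 x) (hb : b ∈ Icc x 1)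
    (hlt : chord f a b x < f x) :
    ∃ u ∈ Icc 0 x, ∃ v ∈ Icc x 1, u < v ∧
      ∀ a ∈ Icc 0 x, ∀ b ∈ Icc x 1, a < b → chord f u v x ≤ chord f a b x := by
  obtain ⟨δ, hδ, hclose⟩ := Metric.continuousWithinAt_iff.1 (hf x hx) _ (sub_pos.2 hlt)
  -- short chords are not minimal, so the minimum can be sought on the compact set `K` below
  have hshort : ∀ a' ∈ Icc 0 x, ∀ b' ∈ Icc x 1, b' - a' < δ → chord f a b x < chord f a' b' x := by
    intro a' ha' b' hb' hδ'
    have hfa := hclose (show a' ∈ Icc 0 1 from ⟨ha'.1, ha'.2.trans hx.2⟩)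
      (by rw [Real.dist_eq, abs_of_nonpos (by linarith [ha'.2])]; linarith [hb'.1])
    have hfb := hclose (show b' ∈ Icc 0 1 from ⟨hx.1.trans hb'.1, hb'.2⟩)
      (by rw [Real.dist_eq, abs_of_nonneg (by linarith [hb'.1])]; linarith [ha'.2])
    rw [Real.dist_eq, abs_lt] at hfa hfb
    have := min_le_chord f ha'.2 hb'.1
    rcases min_choice (f a') (f b') with h | h <;> rw [h] at this <;> linarith
  set K := (Icc 0 x ×ˢ Icc x 1) ∩ {q : ℝ × ℝ | δ ≤ q.2 - q.1}
  have hK : IsCompact K := (isCompact_Icc.prod isCompact_Icc).inter_right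
    (isClosed_le continuous_const (continuous_snd.sub continuous_fst))
  have habK : (a, b) ∈ K := ⟨⟨ha, hb⟩, not_lt.1 fun h => (hshort a ha b hb h).false⟩
  have hcont : ContinuousOn (fun q : ℝ × ℝ => chord f q.1 q.2 x) K := by
    have h1 : ContinuousOn (fun q : ℝ × ℝ => f q.1) K :=
      hf.comp continuousOn_fst fun q hq => ⟨hq.1.1.1, hq.1.1.2.trans hx.2⟩
    have h2 : ContinuousOn (fun q : ℝ × ℝ => f q.2) K :=
      hf.comp continuousOn_snd fun q hq => ⟨hx.1.trans hq.1.2.1, hq.1.2.2⟩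
    simp only [chord, slope_def_field]
    exact h1.add (((h2.sub h1).div (continuousOn_snd.sub continuousOn_fst)
      fun q hq => ne_of_gt (show 0 < q.2 - q.1 by linarith [hq.2.out])).mul
      (continuousOn_const.sub continuousOn_fst))
  obtain ⟨q, hqK, hq⟩ := hK.exists_isMinOn ⟨_, habK⟩ hcont
  refine ⟨q.1, hqK.1.1, q.2, hqK.1.2, by linarith [hqK.2.out], fun a' ha' b' hb' _ => ?_⟩
  by_cases hδ' : δ ≤ b' - a'
  · exact hq (show (a', b') ∈ K from ⟨⟨ha', hb'⟩, hδ'⟩)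
  · exact (hq habK).trans (hshort a' ha' b' hb' (not_le.1 hδ')).le

theorem chord_le_of_minimal {f : ℝ → ℝ} {x u v : ℝ} (hu : u ∈ Icc 0 x) (hv : v ∈ Icc x 1)
    (huv : u < v) (hmin : ∀ a ∈ Icc 0 x, ∀ b ∈ Icc x 1, a < b → chord f u v x ≤ chord f a b x)
    (hlt : chord f u v x < f x) :
    u < x ∧ x < v ∧ ∀ t ∈ Icc (0:ℝ) 1, chord f u v t ≤ f t := by
  have hux : u < x := hu.2.lt_of_ne fun h => by rw [← h, chord_left] at hlt; exact hlt.false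
  have hxv : x < v := hv.1.lt_of_ne fun h => by rw [h, chord_right f huv.ne] at hlt; exact hlt.false
  refine ⟨hux, hxv, fun t ht => not_lt.1 fun hft => ?_⟩
  -- otherwise replacing `u` or `v` by `t` would give a smaller chord at `x`
  rcases le_or_gt t x with htx | hxt
  · have hmin' := hmin t ⟨ht.1, htx⟩ v hv (by linarith)
    have e1 := chord_eq_add f t v v t
    have e2 := chord_eq_add f t v v x
    have e3 := chord_eq_add f u v v t
    have e4 := chord_eq_add f u v v x
    rw [chord_left] at e1
    rw [chord_right f (by linarith : t ≠ v)] at e1 e2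
    rw [chord_right f huv.ne] at e3 e4
    nlinarith
  · have hmin' := hmin u hu t ⟨hxt.le, ht.2⟩ (by linarith)
    have e1 := chord_eq_add f u t u x
    have e2 := chord_eq_add f u t u t
    rw [chord_left] at e1 e2
    rw [chord_right f (by linarith : u ≠ t)] at e2
    have e3 := chord_eq_add f u v u x
    have e4 := chord_eq_add f u v u t
    rw [chord_left] at e3 e4
    nlinarith

structure IsSupportingChord (f g : ℝ → ℝ) (u v : ℝ) : Prop where
  nonneg : 0 ≤ u
  lt : u < v
  le_one : v ≤ 1
  chord_le : ∀ t ∈ Icc (0:ℝ) 1, chord f u v t ≤ f t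
  eq_chord : ∀ t ∈ Icc u v, g t = chord f u v t

namespace IsConvexMinorant

variable {f g : ℝ → ℝ}

theorem eq_of_line_le (hg : IsConvexMinorant f g) {x s : ℝ} (hx : x ∈ Icc (0:ℝ) 1)
    (h : ∀ t ∈ Icc (0:ℝ) 1, f x + s * (t - x) ≤ f t) : g x = f x :=
  (hg.le x hx).antisymm (by simpa using hg.line_le x (f x) s h x hx)

theorem isSupportingChord (hg : IsConvexMinorant f g) {u v : ℝ} (hu : 0 ≤ u) (huv : u < v)
    (hv : v ≤ 1) (h : ∀ t ∈ Icc (0:ℝ) 1, chord f u v t ≤ f t) : IsSupportingChord f g u v where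
  nonneg := hu
  lt := huv
  le_one := hv
  chord_le := h
  eq_chord t ht := (hg.le_chord u ⟨hu, by linarith⟩ v ⟨by linarith, hv⟩ huv t ht).antisymm
    (hg.line_le u (f u) (slope f u v) h t ⟨hu.trans ht.1, ht.2.trans hv⟩)

theorem eq_or_exists_isSupportingChord (hg : IsConvexMinorant f g)
    (hf : ContinuousOn f (Icc 0 1)) {x : ℝ} (hx : x ∈ Ioo (0:ℝ) 1) :
    g x = f x ∨ ∃ u v, IsSupportingChord f g u v ∧ x ∈ Icc u v := by
  by_cases h : ∀ a ∈ Ico 0 x, ∀ b ∈ Ioc x 1, slope f a x ≤ slope f x b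
  · obtain ⟨s, hs⟩ := exists_line_le_of_slope_le hx h
    exact .inl (hg.eq_of_line_le (Ioo_subset_Icc_self hx) hs)
  · push Not at h
    obtain ⟨a, ha, b, hb, hab⟩ := h
    have hlt : chord f a b x < f x := not_le.1 fun h' =>
      hab.not_ge ((le_chord_iff_slope_le f ha.2 hb.1).1 h')
    obtain ⟨u, hu, v, hv, huv, hmin⟩ := exists_minimal_chord hf (Ioo_subset_Icc_self hx)
      (Ico_subset_Icc_self ha) (Ioc_subset_Icc_self hb) hlt
    obtain ⟨hux, hxv, hle⟩ := chord_le_of_minimal hu hv huv hmin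
      ((hmin a (Ico_subset_Icc_self ha) b (Ioc_subset_Icc_self hb) (ha.2.trans hb.1)).trans_lt hlt)
    exact .inr ⟨u, v, hg.isSupportingChord hu.1 huv hv.2 hle, hux.le, hxv.le⟩

theorem eq_of_forall_not_mem {f' : ℝ → ℝ} {L β : ℝ} (hg : IsConvexMinorant f g)
    (hf : HasHolderDeriv f f' L β) (hβ : 0 ≤ β) {x : ℝ} (hx : x ∈ Icc (0:ℝ) 1)
    (h : ∀ u v, IsSupportingChord f g u v → x ∉ Icc u v) : g x = f x := by
  -- at an endpoint, a steep enough line through `(x, f x)` lies below `f`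
  have hline : ∀ t ∈ Icc (0:ℝ) 1, f x + f' x * (t - x) - L * |t - x| ≤ f t := fun t ht => by
    have h1 := (abs_le.1 (hf.abs_sub_sub_le hβ hx ht)).1
    have h2 : |t - x| ^ β ≤ 1 := Real.rpow_le_one (abs_nonneg _)
      (abs_sub_le_iff.2 ⟨by linarith [ht.2, hx.1], by linarith [ht.1, hx.2]⟩) hβ
    have h3 : L * |t - x| ^ β * |t - x| ≤ L * |t - x| := by
      have := hf.nonneg
      have := abs_nonneg (t - x)
      nlinarith [mul_le_mul_of_nonneg_left h2 this]
    linarith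
  rcases eq_endpoints_or_mem_Ioo_of_mem_Icc hx with rfl | rfl | hx'
  · refine hg.eq_of_line_le hx (s := f' 0 - L) fun t ht => ?_
    have := hline t ht
    rw [abs_of_nonneg (by linarith [ht.1])] at this
    linarith
  · refine hg.eq_of_line_le hx (s := f' 1 + L) fun t ht => ?_
    have := hline t ht
    rw [abs_of_nonpos (by linarith [ht.2])] at this
    linarith
  · exact (hg.eq_or_exists_isSupportingChord hf.continuousOn hx').resolve_right
      fun ⟨u, v, hc, hxc⟩ => h u v hc hxc

end IsConvexMinorant

namespace IsSupportingChord

variable {f f' g : ℝ → ℝ} {u v : ℝ}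

theorem exists_tangent_between (hc : IsSupportingChord f g u v)
    (hf : ∀ x ∈ Icc (0:ℝ) 1, HasDerivWithinAt f (f' x) (Icc 0 1) x) {x y : ℝ}
    (hx : x ∈ Icc u v) (hy : y ∈ Icc (0:ℝ) 1) (hy' : y ∉ Icc u v) :
    ∃ p ∈ uIcc x y, f' p = slope f u v ∧ chord f u v p = f p := by
  -- an interior point where the chord touches `f` is a local minimum of `f - chord`
  have touch : ∀ p ∈ Ioo (0:ℝ) 1, chord f u v p = f p → f' p = slope f u v := fun p hp hcp =>
    ((hf p (Ioo_subset_Icc_self hp)).hasDerivAt (Icc_mem_nhds hp.1 hp.2)).eq_of_eventually_line_le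
      (eventually_of_mem (Icc_mem_nhds hp.1 hp.2) fun t ht => by
        rw [← hcp, ← chord_eq_add]; exact hc.chord_le t ht)
  rcases lt_or_ge y u with hyu | huy
  · exact ⟨u, mem_uIcc.2 (.inr ⟨hyu.le, hx.1⟩),
      touch u ⟨hy.1.trans_lt hyu, hc.lt.trans_le hc.le_one⟩ (chord_left f u v), chord_left f u v⟩
  · have hvy : v < y := lt_of_not_ge fun h => hy' ⟨huy, h⟩
    exact ⟨v, mem_uIcc.2 (.inl ⟨hx.2, hvy.le⟩),
      touch v ⟨hc.nonneg.trans_lt hc.lt, hvy.trans_le hy.2⟩ (chord_right f hc.lt.ne),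
      chord_right f hc.lt.ne⟩

theorem hasDerivWithinAt {L β : ℝ} (hc : IsSupportingChord f g u v)
    (hf : HasHolderDeriv f f' L β) (hβ : 0 < β) (hg : IsConvexMinorant f g) {x : ℝ}
    (hx : x ∈ Icc u v) : HasDerivWithinAt g (slope f u v) (Icc 0 1) x := by
  refine hasDerivWithinAt_of_abs_sub_sub_le hβ (C := L) fun t ht => ?_
  have hxI : x ∈ Icc (0:ℝ) 1 := ⟨hc.nonneg.trans hx.1, hx.2.trans hc.le_one⟩
  have hlow : chord f u v t ≤ g t := hg.line_le u (f u) (slope f u v) hc.chord_le t ht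
  rw [hc.eq_chord x hx, sub_sub, ← chord_eq_add, abs_of_nonneg (sub_nonneg.2 hlow)]
  by_cases htc : t ∈ Icc u v
  · rw [hc.eq_chord t htc, sub_self]
    have := hf.nonneg
    positivity
  -- off `[u, v]`, the chord is the tangent of `f` at the endpoint between `x` and `t`
  obtain ⟨p, hp, hf'p, hcp⟩ := hc.exists_tangent_between hf.hasDerivWithinAt hx ht htc
  have hpI : p ∈ Icc (0:ℝ) 1 := uIcc_subset_Icc hxI ht hp
  have htp : |t - p| ≤ |t - x| := abs_sub_right_of_mem_uIcc hp
  have := hf.nonneg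
  calc g t - chord f u v t ≤ f t - f p - f' p * (t - p) := by
        rw [chord_eq_add f u v p, hcp, hf'p]; linarith [hg.le t ht]
    _ ≤ L * |t - p| ^ β * |t - p| := (le_abs_self _).trans (hf.abs_sub_sub_le hβ.le hpI ht)
    _ ≤ L * |t - x| ^ β * |t - x| := by gcongr

theorem derivWithin_eq {L β : ℝ} (hc : IsSupportingChord f g u v)
    (hf : HasHolderDeriv f f' L β) (hβ : 0 < β) (hg : IsConvexMinorant f g) {x : ℝ}
    (hx : x ∈ Icc u v) : derivWithin g (Icc 0 1) x = slope f u v :=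
  (hc.hasDerivWithinAt hf hβ hg hx).derivWithin
    (uniqueDiffOn_Icc zero_lt_one x ⟨hc.nonneg.trans hx.1, hx.2.trans hc.le_one⟩)

end IsSupportingChord

namespace IsConvexMinorant

variable {f f' g : ℝ → ℝ} {L β : ℝ}

theorem hasDerivWithinAt_of_forall_not_mem (hg : IsConvexMinorant f g)
    (hf : HasHolderDeriv f f' L β) (hβ : 0 < β) {x : ℝ} (hx : x ∈ Icc (0:ℝ) 1)
    (h : ∀ u v, IsSupportingChord f g u v → x ∉ Icc u v) :
    HasDerivWithinAt g (f' x) (Icc 0 1) x := by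
  have below : ∀ t ∈ Icc (0:ℝ) 1, ∃ p ∈ uIcc x t, f p + f' p * (t - p) ≤ g t := by
    intro t ht
    by_cases htc : ∃ u v, IsSupportingChord f g u v ∧ t ∈ Icc u v
    · obtain ⟨u, v, hc, htc⟩ := htc
      obtain ⟨p, hp, hf'p, hcp⟩ := hc.exists_tangent_between hf.hasDerivWithinAt htc hx (h u v hc)
      refine ⟨p, uIcc_comm t x ▸ hp, ?_⟩
      rw [hc.eq_chord t htc, chord_eq_add f u v p, hcp, hf'p]
    · push Not at htc
      exact ⟨t, right_mem_uIcc, by rw [hg.eq_of_forall_not_mem hf hβ.le ht htc]; simp⟩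
  -- `f p + f' p * (t - p) ≤ g t ≤ f t`, and both bounds are within the Taylor remainder of the
  -- tangent of `f` at `x`
  refine hasDerivWithinAt_of_abs_sub_sub_le hβ (C := L) fun t ht => ?_
  obtain ⟨p, hp, hpg⟩ := below t ht
  have h1 := abs_le.1 (hf.abs_tangent_sub_tangent_le hβ.le hx ht hp)
  have h2 := abs_le.1 (hf.abs_tangent_sub_tangent_le hβ.le hx ht right_mem_uIcc)
  rw [hg.eq_of_forall_not_mem hf hβ.le hx h, abs_le]
  simp only [sub_self, mul_zero, add_zero] at h2
  constructor <;> linarith [hg.le t ht]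

theorem hasDerivWithinAt_derivWithin (hg : IsConvexMinorant f g) (hf : HasHolderDeriv f f' L β)
    (hβ : 0 < β) {x : ℝ} (hx : x ∈ Icc (0:ℝ) 1) :
    HasDerivWithinAt g (derivWithin g (Icc 0 1) x) (Icc 0 1) x := by
  by_cases h : ∃ u v, IsSupportingChord f g u v ∧ x ∈ Icc u v
  · obtain ⟨u, v, hc, hxc⟩ := h
    exact (hc.hasDerivWithinAt hf hβ hg hxc).differentiableWithinAt.hasDerivWithinAt
  · push Not at h
    exact (hg.hasDerivWithinAt_of_forall_not_mem hf hβ hx h).differentiableWithinAt.hasDerivWithinAt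

theorem exists_derivWithin_eq (hg : IsConvexMinorant f g) (hf : HasHolderDeriv f f' L β)
    (hβ : 0 < β) {x y : ℝ} (hx : x ∈ Icc (0:ℝ) 1) (hy : y ∈ Icc (0:ℝ) 1)
    (h : ∀ u v, IsSupportingChord f g u v → x ∈ Icc u v → y ∉ Icc u v) :
    ∃ p ∈ uIcc x y, derivWithin g (Icc 0 1) x = f' p := by
  by_cases hx' : ∃ u v, IsSupportingChord f g u v ∧ x ∈ Icc u v
  · obtain ⟨u, v, hc, hxc⟩ := hx'
    obtain ⟨p, hp, hf'p, -⟩ := hc.exists_tangent_between hf.hasDerivWithinAt hxc hy (h u v hc hxc)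
    exact ⟨p, hp, by rw [hc.derivWithin_eq hf hβ hg hxc, hf'p]⟩
  · push Not at hx'
    exact ⟨x, left_mem_uIcc, (hg.hasDerivWithinAt_of_forall_not_mem hf hβ hx hx').derivWithin
      (uniqueDiffOn_Icc zero_lt_one x hx)⟩

theorem abs_derivWithin_sub_le (hg : IsConvexMinorant f g) (hf : HasHolderDeriv f f' L β)
    (hβ : 0 < β) {x y : ℝ} (hx : x ∈ Icc (0:ℝ) 1) (hy : y ∈ Icc (0:ℝ) 1) :
    |derivWithin g (Icc 0 1) x - derivWithin g (Icc 0 1) y| ≤ L * |x - y| ^ β := by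
  by_cases h : ∃ u v, IsSupportingChord f g u v ∧ x ∈ Icc u v ∧ y ∈ Icc u v
  · obtain ⟨u, v, hc, hxc, hyc⟩ := h
    rw [hc.derivWithin_eq hf hβ hg hxc, hc.derivWithin_eq hf hβ hg hyc, sub_self, abs_zero]
    exact mul_nonneg hf.nonneg (Real.rpow_nonneg (abs_nonneg _) _)
  · push Not at h
    obtain ⟨p, hp, hpx⟩ := hg.exists_derivWithin_eq hf hβ hx hy h
    obtain ⟨q, hq, hqy⟩ :=
      hg.exists_derivWithin_eq hf hβ hy hx fun u v hc hyc hxc => h u v hc hxc hyc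
    have hpq : |p - q| ≤ |x - y| := by
      rw [abs_sub_comm p, abs_sub_comm x]
      exact abs_sub_le_of_uIcc_subset_uIcc (uIcc_subset_uIcc hp (uIcc_comm y x ▸ hq))
    have := hf.nonneg
    rw [hpx, hqy]
    calc |f' p - f' q| ≤ L * |p - q| ^ β :=
          hf.abs_sub_le p (uIcc_subset_Icc hx hy hp) q (uIcc_subset_Icc hy hx hq)
      _ ≤ L * |x - y| ^ β := by gcongr

end IsConvexMinorant

theorem convex_minorant_holder_derivative_general (α L : ℝ) (hα1 : 1 < α)
    (f f' : ℝ → ℝ)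
    (hderiv : ∀ x ∈ Icc (0:ℝ) 1, HasDerivWithinAt f (f' x) (Icc 0 1) x)
    (hHolder : ∀ x ∈ Icc (0:ℝ) 1, ∀ y ∈ Icc (0:ℝ) 1,
      |f' x - f' y| ≤ L * |x - y| ^ (α - 1))
    (g : ℝ → ℝ)
    (hg : ∀ x ∈ Icc (0:ℝ) 1,
      g x = sInf {y : ℝ | ((x, y) : ℝ × ℝ) ∈
        convexHull ℝ {p : ℝ × ℝ | p.1 ∈ Icc (0:ℝ) 1 ∧ f p.1 ≤ p.2}}) :
    ∃ g' : ℝ → ℝ,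
      (∀ x ∈ Icc (0:ℝ) 1, HasDerivWithinAt g (g' x) (Icc 0 1) x) ∧
      ∀ x ∈ Icc (0:ℝ) 1, ∀ y ∈ Icc (0:ℝ) 1,
        |g' x - g' y| ≤ L * |x - y| ^ (α - 1) := by
  have hf : HasHolderDeriv f f' L (α - 1) := ⟨hderiv, hHolder⟩
  have hβ : 0 < α - 1 := sub_pos.2 hα1
  have hm : IsConvexMinorant f g := isConvexMinorant_of_eq_sInf hf.continuousOn hg
  exact ⟨derivWithin g (Icc 0 1), fun x hx => hm.hasDerivWithinAt_derivWithin hf hβ hx,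
    fun x hx y hy => hm.abs_derivWithin_sub_le hf hβ hx hy⟩

theorem convex_minorant_holder_derivative (α L : ℝ) (hα1 : 1 < α) (hα2 : α < 2)
    (f f' : ℝ → ℝ)
    (hderiv : ∀ x ∈ Icc (0:ℝ) 1, HasDerivWithinAt f (f' x) (Icc 0 1) x)
    (hHolder : ∀ x ∈ Icc (0:ℝ) 1, ∀ y ∈ Icc (0:ℝ) 1,
      |f' x - f' y| ≤ L * |x - y| ^ (α - 1))
    (g : ℝ → ℝ)
    (hg : ∀ x ∈ Icc (0:ℝ) 1,
      g x = sInf {y : ℝ | ((x, y) : ℝ × ℝ) ∈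
        convexHull ℝ {p : ℝ × ℝ | p.1 ∈ Icc (0:ℝ) 1 ∧ f p.1 ≤ p.2}}) :
    ∃ g' : ℝ → ℝ,
      (∀ x ∈ Icc (0:ℝ) 1, HasDerivWithinAt g (g' x) (Icc 0 1) x) ∧
      ∀ x ∈ Icc (0:ℝ) 1, ∀ y ∈ Icc (0:ℝ) 1,
        |g' x - g' y| ≤ L * |x - y| ^ (α - 1) :=
  convex_minorant_holder_derivative_general α L hα1 f f' hderiv hHolder g hg
end

section
/- Suppose 1 < α ≤ 2 and f ∈ C^α[0,1] (f is differentiable and f' is (α−1)-Hölder on [0,1]). Then there exists a closed set A ⊆ [0,1] with dim_H A ≥ α − 1 such that f restricted to A is convex or concave. -/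
/-!
Assume `f'` is not constant, say `f' u < f' v` with `u < v` (otherwise pass to `-f`). Let `A` be
the set of `x ∈ [u, v]` at which the tangent line of `f` lies below `f` on all of `[u, v]`; then `f`
is convex on `A`, and `A` is closed because `f` and `f'` are continuous. For a slope
`m ∈ (f' u, f' v)`, the function `t ↦ f t - m t` attains its minimum over `[u, v]` at an interior
point `c` (as in Darboux's theorem), where `f' c = m` and `c ∈ A`. So `f' '' A` contains an interval,
and since `f'` is `(α - 1)`-Hölder, `1 ≤ dimH (f' '' A) ≤ dimH A / (α - 1)`. If `f'` is constant,
`f` is affine and `A = [0, 1]` works.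
-/

open Set MeasureTheory
open scoped ENNReal NNReal Topology

/-- `ConvexOn` needs a convex domain; this is convexity of `f` restricted to an arbitrary `s`. -/
def ConvexOnPoints (s : Set ℝ) (f : ℝ → ℝ) : Prop :=
  ∀ x₁ ∈ s, ∀ x₂ ∈ s, ∀ x₃ ∈ s, x₁ < x₂ → x₂ < x₃ →
    f x₂ ≤ f x₁ + (f x₃ - f x₁) * (x₂ - x₁) / (x₃ - x₁)

def ConcaveOnPoints (s : Set ℝ) (f : ℝ → ℝ) : Prop :=
  ∀ x₁ ∈ s, ∀ x₂ ∈ s, ∀ x₃ ∈ s, x₁ < x₂ → x₂ < x₃ →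
    f x₁ + (f x₃ - f x₁) * (x₂ - x₁) / (x₃ - x₁) ≤ f x₂

theorem neg_convexOnPoints_iff {s : Set ℝ} {f : ℝ → ℝ} :
    ConvexOnPoints s (-f) ↔ ConcaveOnPoints s f := by
  refine forall₂_congr fun x₁ _ => forall₂_congr fun x₂ _ => forall₂_congr fun x₃ _ => ?_
  have e : (-f x₃ - -f x₁) * (x₂ - x₁) / (x₃ - x₁) = -((f x₃ - f x₁) * (x₂ - x₁) / (x₃ - x₁)) := by
    ring
  simp only [Pi.neg_apply, e]
  constructor <;> intro h h12 h23 <;> linarith [h h12 h23]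

theorem convexOnPoints_of_forall_isMinOn {s : Set ℝ} {f : ℝ → ℝ}
    (h : ∀ x ∈ s, ∃ a, IsMinOn (fun t => f t - a * t) s x) : ConvexOnPoints s f := by
  intro x₁ h₁ x₂ h₂ x₃ h₃ h12 h23
  obtain ⟨a, ha⟩ := h x₂ h₂
  have e₁ : f x₂ - a * x₂ ≤ f x₁ - a * x₁ := ha h₁
  have e₃ : f x₂ - a * x₂ ≤ f x₃ - a * x₃ := ha h₃
  have h13 : 0 < x₃ - x₁ := by linarith
  -- the gap under the chord is a positive combination of the gaps `e₁` and `e₃`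
  have key : f x₁ + (f x₃ - f x₁) * (x₂ - x₁) / (x₃ - x₁) - f x₂ =
      ((f x₁ - a * x₁ - (f x₂ - a * x₂)) * (x₃ - x₂) +
        (f x₃ - a * x₃ - (f x₂ - a * x₂)) * (x₂ - x₁)) / (x₃ - x₁) := by
    field_simp
    ring
  rw [← sub_nonneg, key]
  refine div_nonneg (add_nonneg (mul_nonneg ?_ ?_) (mul_nonneg ?_ ?_)) h13.le <;> linarith

theorem exists_mem_Ioo_isMinOn_sub_mul_and_eq {f f' : ℝ → ℝ} {u v m : ℝ} (huv : u ≤ v)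
    (hf : ∀ x ∈ Icc u v, HasDerivWithinAt f (f' x) (Icc u v) x) (hmu : f' u < m)
    (hmv : m < f' v) :
    ∃ c ∈ Ioo u v, IsMinOn (fun t => f t - m * t) (Icc u v) c ∧ f' c = m := by
  rcases huv.eq_or_lt with (rfl | huv')
  · exact (lt_asymm hmu hmv).elim
  set g : ℝ → ℝ := fun x => f x - m * x
  have hg : ∀ x ∈ Icc u v, HasDerivWithinAt g (f' x - m) (Icc u v) x := fun x hx => by
    simpa using! (hf x hx).sub ((hasDerivWithinAt_id x _).const_mul m)
  obtain ⟨c, cmem, hc⟩ : ∃ c ∈ Icc u v, IsMinOn g (Icc u v) c :=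
    isCompact_Icc.exists_isMinOn (nonempty_Icc.2 huv) fun x hx => (hg x hx).continuousWithinAt
  -- at an endpoint minimum the one-sided derivative into `[u, v]` would be `≥ 0`
  have huc : u < c := by
    refine cmem.1.lt_of_ne fun hcu => ?_
    rw [← hcu] at hc
    have := hc.localize.hasFDerivWithinAt_nonneg (hg u (left_mem_Icc.2 huv))
      (sub_mem_posTangentConeAt_of_segment_subset (segment_eq_Icc huv).subset)
    simp only [ContinuousLinearMap.toSpanSingleton_apply, smul_eq_mul] at this
    nlinarith
  have hcv : c < v := by
    refine cmem.2.lt_of_ne fun hcv => ?_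
    rw [hcv] at hc
    have := hc.localize.hasFDerivWithinAt_nonneg (hg v (right_mem_Icc.2 huv))
      (sub_mem_posTangentConeAt_of_segment_subset (by rw [segment_symm, segment_eq_Icc huv]))
    simp only [ContinuousLinearMap.toSpanSingleton_apply, smul_eq_mul] at this
    nlinarith
  have hnhds : Icc u v ∈ 𝓝 c := Icc_mem_nhds huc hcv
  refine ⟨c, ⟨huc, hcv⟩, hc, ?_⟩
  have := (hc.isLocalMin hnhds).hasDerivAt_eq_zero ((hg c cmem).hasDerivAt hnhds)
  linarith

theorem one_le_dimH_of_Ioo_subset {s : Set ℝ} {a b : ℝ} (hab : a < b) (h : Ioo a b ⊆ s) :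
    1 ≤ dimH s := by
  have : dimH (Ioo a b) = 1 := by
    rw [Real.dimH_of_nonempty_interior (by rwa [interior_Ioo, nonempty_Ioo]),
      Module.finrank_self, Nat.cast_one]
  exact this ▸ dimH_mono h

theorem HolderOnWith.coe_le_dimH_of_Ioo_subset_image {X : Type*} [EMetricSpace X] {C r : ℝ≥0}
    {g : X → ℝ} {s : Set X} {a b : ℝ} (hg : HolderOnWith C r g s) (hr : 0 < r) (hab : a < b)
    (h : Ioo a b ⊆ g '' s) : (r : ℝ≥0∞) ≤ dimH s := by
  have := (one_le_dimH_of_Ioo_subset hab h).trans (hg.dimH_image_le hr)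
  rwa [ENNReal.le_div_iff_mul_le (Or.inl (by exact_mod_cast hr.ne')) (Or.inl ENNReal.coe_ne_top),
    one_mul] at this

theorem HolderOnWith.neg {X E : Type*} [PseudoEMetricSpace X] [SeminormedAddCommGroup E]
    {C r : ℝ≥0} {g : X → E} {s : Set X} (hg : HolderOnWith C r g s) :
    HolderOnWith C r (-g) s := fun x hx y hy => by
  simpa only [Pi.neg_apply, edist_neg_neg] using hg x hx y hy

theorem holderOnWith_of_abs_sub_le {g : ℝ → ℝ} {s : Set ℝ} {L β : ℝ} (hβ : 0 ≤ β)
    (h : ∀ x ∈ s, ∀ y ∈ s, |g x - g y| ≤ L * |x - y| ^ β) :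
    HolderOnWith L.toNNReal β.toNNReal g s := fun x hx y hy => by
  rw [edist_dist, edist_dist, Real.dist_eq, Real.dist_eq, Real.coe_toNNReal _ hβ,
    ENNReal.ofReal_rpow_of_nonneg (abs_nonneg _) hβ, ENNReal.coe_nnreal_eq, Real.coe_toNNReal',
    ← ENNReal.ofReal_mul' (by positivity)]
  exact ENNReal.ofReal_le_ofReal ((h x hx y hy).trans (by gcongr; exact le_max_left _ _))

/-- At a point of `(u, v)` the only possible supporting slope is `f' x`, so fixing the slope to be
`f' x` loses no interior point and makes the set closed. -/
def supportingTangentSet (f f' : ℝ → ℝ) (u v : ℝ) : Set ℝ :=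
  {x ∈ Icc u v | IsMinOn (fun t => f t - f' x * t) (Icc u v) x}

section supportingTangentSet

variable {f f' : ℝ → ℝ} {u v : ℝ}

theorem isClosed_supportingTangentSet (hf : ContinuousOn f (Icc u v))
    (hf' : ContinuousOn f' (Icc u v)) : IsClosed (supportingTangentSet f f' u v) := by
  have : supportingTangentSet f f' u v = Icc u v ∩ ⋂ t ∈ Icc u v,
      Icc u v ∩ (fun x => f x - f' x * x - (f t - f' x * t)) ⁻¹' Iic 0 := by
    ext x
    simp only [supportingTangentSet, IsMinOn, IsMinFilter, mem_inter_iff,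
      mem_iInter, mem_preimage, mem_Iic, sub_nonpos, Filter.eventually_principal]
    grind
  rw [this]
  exact isClosed_Icc.inter <| isClosed_biInter fun t _ =>
    ContinuousOn.preimage_isClosed_of_isClosed (by fun_prop) isClosed_Icc isClosed_Iic

theorem Ioo_subset_image_supportingTangentSet (huv : u ≤ v)
    (hf : ∀ x ∈ Icc u v, HasDerivWithinAt f (f' x) (Icc u v) x) :
    Ioo (f' u) (f' v) ⊆ f' '' supportingTangentSet f f' u v := by
  rintro m ⟨hmu, hmv⟩
  obtain ⟨c, hc, hmin, rfl⟩ := exists_mem_Ioo_isMinOn_sub_mul_and_eq huv hf hmu hmv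
  exact ⟨c, ⟨Ioo_subset_Icc_self hc, hmin⟩, rfl⟩

theorem convexOnPoints_supportingTangentSet : ConvexOnPoints (supportingTangentSet f f' u v) f :=
  convexOnPoints_of_forall_isMinOn fun x hx => ⟨f' x, hx.2.on_subset fun _ ht => ht.1⟩

end supportingTangentSet

theorem exists_isClosed_convexOnPoints_coe_le_dimH {f f' : ℝ → ℝ} {a b u v : ℝ} {C r : ℝ≥0}
    (hf : ∀ x ∈ Icc a b, HasDerivWithinAt f (f' x) (Icc a b) x)
    (hf' : HolderOnWith C r f' (Icc a b)) (hr : 0 < r) (hu : u ∈ Icc a b) (hv : v ∈ Icc a b)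
    (huv : u ≤ v) (hlt : f' u < f' v) :
    ∃ A ⊆ Icc a b, IsClosed A ∧ (r : ℝ≥0∞) ≤ dimH A ∧ ConvexOnPoints A f := by
  have hsub : Icc u v ⊆ Icc a b := Icc_subset_Icc hu.1 hv.2
  have hfuv : ∀ x ∈ Icc u v, HasDerivWithinAt f (f' x) (Icc u v) x :=
    fun x hx => (hf x (hsub hx)).mono hsub
  have hA : supportingTangentSet f f' u v ⊆ Icc a b := fun x hx => hsub hx.1
  refine ⟨_, hA, isClosed_supportingTangentSet (fun x hx => (hfuv x hx).continuousWithinAt)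
    ((hf'.continuousOn hr).mono hsub), ?_, convexOnPoints_supportingTangentSet⟩
  exact (hf'.mono hA).coe_le_dimH_of_Ioo_subset_image hr hlt
    (Ioo_subset_image_supportingTangentSet huv hfuv)

theorem convexOnPoints_Icc_of_hasDerivWithinAt_const {f : ℝ → ℝ} {a b c : ℝ}
    (hf : ∀ x ∈ Icc a b, HasDerivWithinAt f c (Icc a b) x) : ConvexOnPoints (Icc a b) f := by
  have hg : ∀ x ∈ Icc a b, HasDerivWithinAt (fun t => f t - c * t) 0 (Icc a b) x := fun x hx => by
    simpa using! (hf x hx).sub ((hasDerivWithinAt_id x _).const_mul c)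
  have hconst : ∀ x ∈ Icc a b, f x - c * x = f a - c * a := fun x hx => by
    simpa [sub_eq_zero] using
      norm_image_sub_le_of_norm_deriv_le_segment' hg (fun _ _ => norm_zero.le) x hx
  exact convexOnPoints_of_forall_isMinOn fun x hx =>
    ⟨c, fun t ht => (hconst x hx).trans (hconst t ht).symm |>.le⟩

theorem holder_convex_or_concave_restriction (α L : ℝ) (hα1 : 1 < α) (hα2 : α ≤ 2)
    (f f' : ℝ → ℝ)
    (hderiv : ∀ x ∈ Icc (0:ℝ) 1, HasDerivWithinAt f (f' x) (Icc 0 1) x)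
    (hHolder : ∀ x ∈ Icc (0:ℝ) 1, ∀ y ∈ Icc (0:ℝ) 1,
      |f' x - f' y| ≤ L * |x - y| ^ (α - 1)) :
    ∃ A ⊆ Icc (0:ℝ) 1, IsClosed A ∧ ENNReal.ofReal (α - 1) ≤ dimH A ∧
      ((∀ x₁ ∈ A, ∀ x₂ ∈ A, ∀ x₃ ∈ A, x₁ < x₂ → x₂ < x₃ →
          f x₂ ≤ f x₁ + (f x₃ - f x₁) * (x₂ - x₁) / (x₃ - x₁)) ∨
       (∀ x₁ ∈ A, ∀ x₂ ∈ A, ∀ x₃ ∈ A, x₁ < x₂ → x₂ < x₃ →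
          f x₁ + (f x₃ - f x₁) * (x₂ - x₁) / (x₃ - x₁) ≤ f x₂)) := by
  have hr : 0 < (α - 1).toNNReal := Real.toNNReal_pos.2 (by linarith)
  have hH := holderOnWith_of_abs_sub_le (by linarith) hHolder
  have h0 : (0:ℝ) ∈ Icc (0:ℝ) 1 := left_mem_Icc.2 zero_le_one
  by_cases hconst : ∀ x ∈ Icc (0:ℝ) 1, f' x = f' 0
  · refine ⟨Icc 0 1, subset_rfl, isClosed_Icc, ?_, Or.inl ?_⟩
    · exact (ENNReal.ofReal_le_one.2 (by linarith)).trans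
        (one_le_dimH_of_Ioo_subset zero_lt_one Ioo_subset_Icc_self)
    · exact convexOnPoints_Icc_of_hasDerivWithinAt_const fun x hx => hconst x hx ▸ hderiv x hx
  obtain ⟨x, hx, hne⟩ := not_forall₂.1 hconst
  rcases Ne.lt_or_gt hne with hlt | hgt
  · obtain ⟨A, hA, hAc, hAd, hconv⟩ := exists_isClosed_convexOnPoints_coe_le_dimH (f := -f)
      (fun y hy => (hderiv y hy).neg) hH.neg hr h0 hx hx.1 (neg_lt_neg hlt)
    exact ⟨A, hA, hAc, hAd, Or.inr (neg_convexOnPoints_iff.1 hconv)⟩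
  · obtain ⟨A, hA, hAc, hAd, hconv⟩ :=
      exists_isClosed_convexOnPoints_coe_le_dimH hderiv hH hr h0 hx hx.1 hgt
    exact ⟨A, hA, hAc, hAd, Or.inl hconv⟩
end

section
/- Suppose 0 ≤ α < 1 and let G_α be a dense G_δ subset of the space C₁^α[0,1] of functions f : [0,1] → ℝ with |f(x) − f(y)| ≤ |x − y|^α, endowed with the supremum metric (for α = 0 use C[0,1]). Then the set G_{1+α} = {g ∈ C₁^{1+α}[0,1] : g' ∈ G_α} is a dense G_δ subset of C₁^{1+α}[0,1], where C₁^{1+α}[0,1] is the space of differentiable g with |g'(x) − g'(y)| ≤ |x − y|^α, endowed with the C¹ metric ‖g − h‖ = max(‖g − h‖_∞, ‖g' − h'‖_∞). -/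
open Set

/-- The space `C₁^α[0,1]` of functions on `[0,1]` with `|f x - f y| ≤ |x-y|^α`
(all of `C[0,1]` when `α = 0`), with the sup metric. -/
def HolderSet (α : ℝ) : Set C(Icc (0:ℝ) 1, ℝ) :=
  {f | α = 0 ∨ ∀ x y : Icc (0:ℝ) 1, |f x - f y| ≤ |(x : ℝ) - (y : ℝ)| ^ α}

/-- The space `C₁^{1+α}[0,1]`: pairs `(g, g')` where `g'` is the derivative of `g`
on `[0,1]` and `|g' x - g' y| ≤ |x-y|^α` (just `C¹[0,1]` when `α = 0`); the product
metric on `C(I,ℝ) × C(I,ℝ)` is exactly the `C¹` metric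
`max (‖g-h‖_∞) (‖g'-h'‖_∞)`. -/
def C1HolderSet (α : ℝ) : Set (C(Icc (0:ℝ) 1, ℝ) × C(Icc (0:ℝ) 1, ℝ)) :=
  {p | (∀ x : Icc (0:ℝ) 1,
          HasDerivWithinAt (Set.IccExtend zero_le_one ⇑p.1) (p.2 x) (Icc 0 1) (x : ℝ)) ∧
       (α = 0 ∨ ∀ x y : Icc (0:ℝ) 1, |p.2 x - p.2 y| ≤ |(x : ℝ) - (y : ℝ)| ^ α)}

lemma isGδ_preimage_aux {X Y : Type*} [TopologicalSpace X] [TopologicalSpace Y] {s : Set Y}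
    (hs : IsGδ s) {f : X → Y} (hf : Continuous f) : IsGδ (f ⁻¹' s) := by
  obtain ⟨T, hTo, hTc, rfl⟩ := hs
  rw [preimage_sInter]
  exact IsGδ.biInter hTc fun t ht => ((hTo t ht).preimage hf).isGδ

theorem dense_Gdelta_lifts_to_C1 (α : ℝ) (hα0 : 0 ≤ α) (hα1 : α < 1)
    (Gα : Set (HolderSet α)) (hdense : Dense Gα) (hGδ : IsGδ Gα) :
    Dense {p : C1HolderSet α | (⟨p.1.2, p.2.2⟩ : HolderSet α) ∈ Gα} ∧
      IsGδ {p : C1HolderSet α | (⟨p.1.2, p.2.2⟩ : HolderSet α) ∈ Gα} := by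
  have hπc : Continuous (fun p : C1HolderSet α => (⟨p.1.2, p.2.2⟩ : HolderSet α)) :=
    Continuous.subtype_mk (continuous_snd.comp continuous_subtype_val) _
  constructor
  · rw [Metric.dense_iff]
    rintro ⟨⟨g, g'⟩, hgd, hgh⟩ ε hε
    obtain ⟨f, hfball, hfG⟩ := Metric.dense_iff.mp hdense ⟨g', hgh⟩ ε hε
    have hfball' : dist (f : C(Icc (0:ℝ) 1, ℝ)) g' < ε := by
      have := Metric.mem_ball.mp hfball
      rwa [Subtype.dist_eq] at this
    -- extensions to ℝ
    set fe : ℝ → ℝ := IccExtend zero_le_one ⇑(f : C(Icc (0:ℝ) 1, ℝ)) with hfe_def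
    have hfec : Continuous fe := (f : C(Icc (0:ℝ) 1, ℝ)).continuous.comp continuous_projIcc
    set ge : ℝ → ℝ := IccExtend zero_le_one ⇑g' with hge_def
    have hgec : Continuous ge := g'.continuous.comp continuous_projIcc
    -- the primitive of fe
    set F : ℝ → ℝ := fun t => ∫ s in (0:ℝ)..t, fe s with hF_def
    have hF : ∀ t : ℝ, HasDerivAt F (fe t) t := fun t =>
      intervalIntegral.integral_hasDerivAt_right (hfec.intervalIntegrable _ _)
        (hfec.stronglyMeasurableAtFilter _ _) hfec.continuousAt
    have hFc : Continuous F :=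
      continuous_iff_continuousAt.mpr fun t => (hF t).differentiableAt.continuousAt
    set c : ℝ := g ⟨0, by norm_num⟩ with hc_def
    set G : C(Icc (0:ℝ) 1, ℝ) :=
      ⟨fun x => c + F (x : ℝ), continuous_const.add (hFc.comp continuous_subtype_val)⟩
      with hG_def
    -- G has derivative f on [0,1]
    have hGd : ∀ x : Icc (0:ℝ) 1,
        HasDerivWithinAt (IccExtend zero_le_one ⇑G) ((f : C(Icc (0:ℝ) 1, ℝ)) x)
          (Icc 0 1) (x : ℝ) := by
      intro x
      have h1 : HasDerivWithinAt (fun t => c + F t) (fe (x : ℝ)) (Icc 0 1) (x : ℝ) :=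
        ((hF (x : ℝ)).const_add c).hasDerivWithinAt
      have h2 : ∀ t ∈ Icc (0:ℝ) 1, IccExtend zero_le_one ⇑G t = c + F t := by
        intro t ht
        rw [IccExtend_of_mem _ _ ht]
        rfl
      have hx : fe (x : ℝ) = (f : C(Icc (0:ℝ) 1, ℝ)) x := IccExtend_val _ _ _
      rw [← hx]
      exact h1.congr h2 (h2 (x : ℝ) x.2)
    -- fundamental theorem of calculus for g
    have hg_ftc : ∀ x : Icc (0:ℝ) 1, ∫ s in (0:ℝ)..(x : ℝ), ge s = g x - c := by
      intro x
      have h0 : (0:ℝ) ≤ (x : ℝ) := x.2.1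
      have hderiv : ∀ y ∈ Ioo (0:ℝ) (x : ℝ),
          HasDerivWithinAt (IccExtend zero_le_one ⇑g) (ge y) (Ioi y) y := by
        intro y hy
        have hy1 : y ∈ Icc (0:ℝ) 1 := ⟨hy.1.le, hy.2.le.trans x.2.2⟩
        have hd := hgd ⟨y, hy1⟩
        have hmem : Icc (0:ℝ) 1 ∈ nhds y :=
          Icc_mem_nhds hy.1 (lt_of_lt_of_le hy.2 x.2.2)
        have : ge y = g' ⟨y, hy1⟩ := IccExtend_of_mem _ _ hy1
        rw [this]
        exact (hd.hasDerivAt hmem).hasDerivWithinAt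
      have := intervalIntegral.integral_eq_sub_of_hasDeriv_right_of_le h0
        ((show Continuous (IccExtend zero_le_one ⇑g) from
          g.continuous.comp continuous_projIcc).continuousOn) hderiv
        (hgec.intervalIntegrable _ _)
      rw [this, IccExtend_of_mem _ _ x.2, IccExtend_of_mem _ _ (by norm_num : (0:ℝ) ∈ Icc (0:ℝ) 1)]
    -- pointwise bound for fe - ge
    have hCpoint : ∀ t : ℝ, ‖fe t - ge t‖ ≤ dist (f : C(Icc (0:ℝ) 1, ℝ)) g' := by
      intro t
      have : fe t - ge t =
          (f : C(Icc (0:ℝ) 1, ℝ)) (projIcc 0 1 zero_le_one t) - g' (projIcc 0 1 zero_le_one t) :=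
        rfl
      rw [this, Real.norm_eq_abs, ← Real.dist_eq]
      exact ContinuousMap.dist_apply_le_dist _
    -- sup distance bound for G vs g
    have hGdist : dist G g ≤ dist (f : C(Icc (0:ℝ) 1, ℝ)) g' := by
      rw [ContinuousMap.dist_le dist_nonneg]
      intro x
      have hsub : G x - g x = ∫ s in (0:ℝ)..(x : ℝ), (fe s - ge s) := by
        rw [intervalIntegral.integral_sub (hfec.intervalIntegrable _ _)
          (hgec.intervalIntegrable _ _), hg_ftc x]
        show c + F (x : ℝ) - g x = F (x : ℝ) - (g x - c)
        ring
      rw [Real.dist_eq, hsub]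
      calc |∫ s in (0:ℝ)..(x : ℝ), (fe s - ge s)|
          ≤ dist (f : C(Icc (0:ℝ) 1, ℝ)) g' * |(x : ℝ) - 0| :=
            intervalIntegral.norm_integral_le_of_norm_le_const fun t _ => hCpoint t
        _ ≤ dist (f : C(Icc (0:ℝ) 1, ℝ)) g' * 1 := by
            apply mul_le_mul_of_nonneg_left _ dist_nonneg
            rw [sub_zero, abs_of_nonneg x.2.1]
            exact x.2.2
        _ = dist (f : C(Icc (0:ℝ) 1, ℝ)) g' := mul_one _
    -- the approximating element
    refine ⟨⟨⟨G, (f : C(Icc (0:ℝ) 1, ℝ))⟩, hGd, f.2⟩, Metric.mem_ball.mpr ?_, ?_⟩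
    · rw [Subtype.dist_eq, Prod.dist_eq]
      exact max_lt (lt_of_le_of_lt hGdist hfball') hfball'
    · exact hfG
  · exact isGδ_preimage_aux hGδ hπc
end

section
/- Let f ∈ C¹[0,1] (continuously differentiable) and let A ⊆ [0,1] be a set on which f is convex. Then there exists a set B ⊆ [0,1] such that f' restricted to B is monotone increasing and dim_H B ≥ dim_H A, lower Minkowski dimension of B ≥ lower Minkowski dimension of A, and upper Minkowski dimension of B ≥ upper Minkowski dimension of A. -/
open Set MeasureTheory

/-- Number of dyadic grid intervals `[(j-1)/2^ℓ, j/2^ℓ]` meeting `A`. -/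
noncomputable def gridCount (ℓ : ℕ) (A : Set ℝ) : ℕ :=
  Set.ncard {j : ℤ | (A ∩ Icc (((j : ℝ) - 1) / 2 ^ ℓ) ((j : ℝ) / 2 ^ ℓ)).Nonempty}

/-- Lower Minkowski (box) dimension via dyadic grid counts. -/
noncomputable def lowerMinkowskiDim (A : Set ℝ) : ℝ :=
  Filter.liminf (fun ℓ : ℕ => Real.log (gridCount ℓ A) / (ℓ * Real.log 2)) Filter.atTop

/-- Upper Minkowski (box) dimension via dyadic grid counts. -/
noncomputable def upperMinkowskiDim (A : Set ℝ) : ℝ :=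
  Filter.limsup (fun ℓ : ℕ => Real.log (gridCount ℓ A) / (ℓ * Real.log 2)) Filter.atTop

/-!
Let `K` be the closure of `A`; by continuity, slopes of adjacent chords of `f` over `K` still
increase. Let `B` be the set of points `u` at which `f' u` separates the slopes of the chords of
`K` to the left of `u` from those to the right of `u`, a point in a gap of `K` counting as lying
between the two ends of the gap; `f'` is monotone on such a set. At an accumulation point of `K`
the derivative is a limit of slopes of chords of `K`, so these points lie in `B`, and by the mean
value theorem every gap of `K` contains a point of `B`. Thus `A \ B` consists of isolated points
of `K`, a countable set, which gives `dim_H A ≤ dim_H B`. Moreover each of these points is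
followed by a point of `B` before the next point of `A`, so at every scale `2⁻ˡ` the set `A` meets
at most `4 N + 2` grid intervals when `B` meets `N`, which gives the Minkowski inequalities.
-/

open Filter Topology

section Slope

variable {f : ℝ → ℝ} {a b c : ℝ}

theorem slope_le_slope_left_iff (hab : a < b) (hbc : b < c) :
    slope f a b ≤ slope f a c ↔ slope f a b ≤ slope f b c := by
  rw [← lineMap_slope_slope_sub_div_sub f a b c (hab.trans hbc).ne]
  exact left_le_lineMap_iff_le (div_pos (sub_pos.2 hbc) (sub_pos.2 (hab.trans hbc)))

theorem slope_le_slope_right_iff (hab : a < b) (hbc : b < c) :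
    slope f a c ≤ slope f b c ↔ slope f a b ≤ slope f b c := by
  rw [← lineMap_slope_slope_sub_div_sub f a b c (hab.trans hbc).ne]
  exact lineMap_le_right_iff_le ((div_lt_one (sub_pos.2 (hab.trans hbc))).2 (by linarith))

def SlopeMonotoneOn (f : ℝ → ℝ) (s : Set ℝ) : Prop :=
  ∀ a ∈ s, ∀ b ∈ s, ∀ c ∈ s, a < b → b < c → slope f a b ≤ slope f b c

theorem SlopeMonotoneOn.of_secondDividedDiff_nonneg {s : Set ℝ}
    (h : ∀ a ∈ s, ∀ b ∈ s, ∀ c ∈ s, a < b → b < c →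
      0 ≤ ((f c - f b) / (c - b) - (f b - f a) / (b - a)) / (c - a)) :
    SlopeMonotoneOn f s := fun a ha b hb c hc hab hbc => by
  have := (le_div_iff₀ (sub_pos.2 (hab.trans hbc))).1 (h a ha b hb c hc hab hbc)
  simp only [slope_def_field]
  linarith

theorem SlopeMonotoneOn.slope_le_slope {s : Set ℝ} (h : SlopeMonotoneOn f s) {p q r t : ℝ}
    (hp : p ∈ s) (hq : q ∈ s) (hr : r ∈ s) (ht : t ∈ s) (hpq : p < q) (hrt : r < t)
    (hpr : p ≤ r) (hqt : q ≤ t) : slope f p q ≤ slope f r t := by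
  have hpt : slope f p q ≤ slope f p t := by
    rcases hqt.eq_or_lt with rfl | hqt
    · exact le_rfl
    · exact (slope_le_slope_left_iff hpq hqt).2 (h p hp q hq t ht hpq hqt)
  have htr : slope f p t ≤ slope f r t := by
    rcases hpr.eq_or_lt with rfl | hpr
    · exact le_rfl
    · exact (slope_le_slope_right_iff hpr hrt).2 (h p hp r hr t ht hpr hrt)
  exact hpt.trans htr

theorem ContinuousOn.continuousWithinAt_slope {s : Set ℝ} (hf : ContinuousOn f s) {x y : ℝ}
    (hx : x ∈ s) (hy : y ∈ s) (hxy : x ≠ y) :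
    ContinuousWithinAt (fun p : ℝ × ℝ => slope f p.1 p.2) (s ×ˢ s) (x, y) := by
  simp only [slope_def_field]
  exact (((hf y hy).comp continuousWithinAt_snd fun _ hp => hp.2).sub
    ((hf x hx).comp continuousWithinAt_fst fun _ hp => hp.1)).div
    (continuousWithinAt_snd.sub continuousWithinAt_fst) (sub_ne_zero.2 hxy.symm)

theorem SlopeMonotoneOn.closure {s : Set ℝ} (h : SlopeMonotoneOn f s)
    (hf : ContinuousOn f (closure s)) : SlopeMonotoneOn f (closure s) := by
  intro a ha b hb c hc hab hbc
  set T : Set (ℝ × ℝ × ℝ) := {t | t.1 < t.2.1 ∧ t.2.1 < t.2.2} ∩ s ×ˢ s ×ˢ s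
  have hT : IsOpen {t : ℝ × ℝ × ℝ | t.1 < t.2.1 ∧ t.2.1 < t.2.2} :=
    (isOpen_lt continuous_fst (continuous_fst.comp continuous_snd)).inter
      (isOpen_lt (continuous_fst.comp continuous_snd) (continuous_snd.comp continuous_snd))
  have hmem : (a, b, c) ∈ _root_.closure T :=
    hT.inter_closure ⟨⟨hab, hbc⟩, by simpa only [closure_prod_eq] using ⟨ha, hb, hc⟩⟩
  have hright : ContinuousWithinAt (fun t : ℝ × ℝ × ℝ => slope f t.2.1 t.2.2) T (a, b, c) :=
    (hf.continuousWithinAt_slope hb hc hbc.ne).comp (x := (a, b, c))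
      (f := fun t : ℝ × ℝ × ℝ => (t.2.1, t.2.2)) (by fun_prop : Continuous _).continuousWithinAt
      fun t ht => ⟨subset_closure ht.2.2.1, subset_closure ht.2.2.2⟩
  have hleft : ContinuousWithinAt (fun t : ℝ × ℝ × ℝ => slope f t.1 t.2.1) T (a, b, c) :=
    (hf.continuousWithinAt_slope ha hb hab.ne).comp (x := (a, b, c))
      (f := fun t : ℝ × ℝ × ℝ => (t.1, t.2.1)) (by fun_prop : Continuous _).continuousWithinAt
      fun t ht => ⟨subset_closure ht.2.1, subset_closure ht.2.2.1⟩
  have := (hright.sub hleft).mem_closure (t := Ici 0) hmem fun t ht =>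
    sub_nonneg.2 (h _ ht.2.1 _ ht.2.2.1 _ ht.2.2.2 ht.1.1 ht.1.2)
  rwa [closure_Ici, mem_Ici, Pi.sub_apply, sub_nonneg] at this

theorem SlopeMonotoneOn.deriv_le_slope {s : Set ℝ} (h : SlopeMonotoneOn f s) {f'x x y : ℝ}
    (hf : HasDerivWithinAt f f'x s x) (hacc : AccPt x (𝓟 s)) (hx : x ∈ s) (hy : y ∈ s)
    (hxy : x < y) : f'x ≤ slope f x y := by
  have : (𝓝[s \ {x}] x).NeBot := accPt_principal_iff_nhdsWithin.1 hacc
  have hnear : ∀ᶠ z in 𝓝[s \ {x}] x, z < y := nhdsWithin_le_nhds (eventually_lt_nhds hxy)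
  refine le_of_tendsto (hasDerivWithinAt_iff_tendsto_slope.1 hf)
    ((hnear.and self_mem_nhdsWithin).mono fun z ⟨hzy, hzs, hzx⟩ => ?_)
  rcases lt_or_gt_of_ne hzx with hzx | hxz
  · rw [slope_comm]
    exact h z hzs x hx y hy hzx hxy
  · exact (slope_le_slope_left_iff hxz hzy).2 (h x hx z hzs y hy hxz hzy)

theorem SlopeMonotoneOn.slope_le_deriv {s : Set ℝ} (h : SlopeMonotoneOn f s) {f'x x y : ℝ}
    (hf : HasDerivWithinAt f f'x s x) (hacc : AccPt x (𝓟 s)) (hx : x ∈ s) (hy : y ∈ s)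
    (hyx : y < x) : slope f y x ≤ f'x := by
  have : (𝓝[s \ {x}] x).NeBot := accPt_principal_iff_nhdsWithin.1 hacc
  have hnear : ∀ᶠ z in 𝓝[s \ {x}] x, y < z := nhdsWithin_le_nhds (eventually_gt_nhds hyx)
  refine ge_of_tendsto (hasDerivWithinAt_iff_tendsto_slope.1 hf)
    ((hnear.and self_mem_nhdsWithin).mono fun z ⟨hyz, hzs, hzx⟩ => ?_)
  rcases lt_or_gt_of_ne hzx with hzx | hxz
  · rw [slope_comm f x]
    exact (slope_le_slope_right_iff hyz hzx).2 (h y hy z hzs x hx hyz hzx)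
  · exact h y hy x hx z hzs hyx hxz

end Slope

section SqueezeSet

variable {f f' : ℝ → ℝ} {K : Set ℝ}

def SeparatesSlopes (f : ℝ → ℝ) (K : Set ℝ) (c d m : ℝ) : Prop :=
  ∀ p ∈ K, ∀ q ∈ K, p < q →
    (p ≤ c → q ≤ d → slope f p q ≤ m) ∧ (c ≤ p → d ≤ q → m ≤ slope f p q)

-- `[c, d]` contains `u` and no point of `K` in its interior: `{u}`, or the closure of a gap of `K`.
def slopeSqueezeSet (f f' : ℝ → ℝ) (K : Set ℝ) : Set ℝ :=
  {u | ∃ c ∈ K, ∃ d ∈ K, c ≤ u ∧ u ≤ d ∧ (∀ z ∈ K, z ≤ c ∨ d ≤ z) ∧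
    SeparatesSlopes f K c d (f' u)}

theorem slopeSqueezeSet_subset_Icc {a b : ℝ} (hK : K ⊆ Icc a b) :
    slopeSqueezeSet f f' K ⊆ Icc a b :=
  fun _ ⟨_, hc, _, hd, hcu, hud, _⟩ => ⟨(hK hc).1.trans hcu, hud.trans (hK hd).2⟩

theorem monotoneOn_slopeSqueezeSet : MonotoneOn f' (slopeSqueezeSet f f' K) := by
  rintro u ⟨c, hc, d, hd, hcu, hud, hgap, hsep⟩ v ⟨c', hc', d', hd', hcv, hvd, hgap', hsep'⟩ huv
  rcases huv.eq_or_lt with rfl | huv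
  · exact le_rfl
  have hcc' : c ≤ c' := (hgap' c hc).resolve_right (by linarith)
  have hdd' : d ≤ d' := (hgap d' hd').resolve_left (by linarith)
  have hcd' : c < d' := by linarith
  exact ((hsep c hc d' hd' hcd').2 le_rfl hdd').trans ((hsep' c hc d' hd' hcd').1 hcc' le_rfl)

theorem SlopeMonotoneOn.mem_slopeSqueezeSet (hK : SlopeMonotoneOn f K) {x : ℝ} (hx : x ∈ K)
    (hacc : AccPt x (𝓟 K)) (hf : HasDerivWithinAt f (f' x) K x) :
    x ∈ slopeSqueezeSet f f' K := by
  refine ⟨x, hx, x, hx, le_rfl, le_rfl, fun z _ => le_total z x, fun p hp q hq hpq => ⟨?_, ?_⟩⟩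
  · intro hpx hqx
    exact (hK.slope_le_slope hp hq hp hx hpq (hpq.trans_le hqx) le_rfl hqx).trans
      (hK.slope_le_deriv hf hacc hx hp (hpq.trans_le hqx))
  · intro hxp hxq
    exact (hK.deriv_le_slope hf hacc hx hq (hxp.trans_lt hpq)).trans
      (hK.slope_le_slope hx hq hp hq (hxp.trans_lt hpq) hpq hxp le_rfl)

theorem SlopeMonotoneOn.exists_mem_slopeSqueezeSet_of_gap (hK : SlopeMonotoneOn f K) {c d : ℝ}
    (hc : c ∈ K) (hd : d ∈ K) (hcd : c < d) (hgap : ∀ z ∈ K, z ≤ c ∨ d ≤ z)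
    (hfc : ContinuousOn f (Icc c d)) (hf : ∀ x ∈ Ioo c d, HasDerivAt f (f' x) x) :
    ∃ ξ ∈ Ioo c d, ξ ∈ slopeSqueezeSet f f' K := by
  obtain ⟨ξ, hξ, hξslope⟩ := exists_hasDerivAt_eq_slope f f' hcd hfc hf
  rw [← slope_def_field] at hξslope
  refine ⟨ξ, hξ, c, hc, d, hd, hξ.1.le, hξ.2.le, hgap, fun p hp q hq hpq => ⟨?_, ?_⟩⟩
  · intro hpc hqd
    exact hξslope ▸ hK.slope_le_slope hp hq hc hd hpq hcd hpc hqd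
  · intro hcp hdq
    exact hξslope ▸ hK.slope_le_slope hc hd hp hq hcd hpq hcp hdq

theorem IsClosed.exists_gap_right_of_not_accPt (hK : IsClosed K) {x y : ℝ}
    (hacc : ¬AccPt x (𝓟 K)) (hy : y ∈ K) (hxy : x < y) :
    ∃ d ∈ K, x < d ∧ ∀ z ∈ K, z ≤ x ∨ d ≤ z := by
  set S := K ∩ Ioi x
  have hSne : S.Nonempty := ⟨y, hy, hxy⟩
  have hSbdd : BddBelow S := ⟨x, fun z hz => le_of_lt hz.2⟩
  have hdS : sInf S ∈ closure S := csInf_mem_closure hSne hSbdd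
  have hxd : x < sInf S := by
    refine (le_csInf hSne fun z hz => le_of_lt hz.2).lt_of_ne fun hxd => hacc ?_
    rw [accPt_principal_iff_nhdsWithin, ← mem_closure_iff_nhdsWithin_neBot]
    exact closure_mono (t := K \ {x}) (fun z hz => ⟨hz.1, ne_of_gt hz.2⟩) (hxd ▸ hdS)
  refine ⟨sInf S, closure_minimal inter_subset_left hK hdS, hxd, fun z hz => ?_⟩
  exact (le_or_gt z x).imp_right fun hxz => csInf_le hSbdd ⟨hz, hxz⟩

theorem exists_mem_slopeSqueezeSet_right {a b : ℝ}
    (hderiv : ∀ x ∈ Icc a b, HasDerivWithinAt f (f' x) (Icc a b) x)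
    (hKc : IsClosed K) (hKab : K ⊆ Icc a b) (hK : SlopeMonotoneOn f K) {x y : ℝ}
    (hx : x ∈ K) (hy : y ∈ K) (hxy : x < y) (hxB : x ∉ slopeSqueezeSet f f' K) :
    ∃ ξ ∈ slopeSqueezeSet f f' K, x < ξ ∧ ∀ z ∈ K, x < z → ξ < z := by
  have hacc : ¬AccPt x (𝓟 K) := fun hacc =>
    hxB (hK.mem_slopeSqueezeSet hx hacc ((hderiv x (hKab hx)).mono hKab))
  obtain ⟨d, hd, hxd, hgap⟩ := hKc.exists_gap_right_of_not_accPt hacc hy hxy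
  have hsub : Icc x d ⊆ Icc a b := Icc_subset_Icc (hKab hx).1 (hKab hd).2
  obtain ⟨ξ, hξ, hξB⟩ := hK.exists_mem_slopeSqueezeSet_of_gap hx hd hxd hgap
    (fun z hz => (hderiv z (hsub hz)).continuousWithinAt.mono hsub)
    (fun z hz => (hderiv z (hsub (Ioo_subset_Icc_self hz))).hasDerivAt
      (Icc_mem_nhds ((hKab hx).1.trans_lt hz.1) (hz.2.trans_le (hKab hd).2)))
  exact ⟨ξ, hξB, hξ.1, fun z hz hxz => hξ.2.trans_le ((hgap z hz).resolve_left (not_le.2 hxz))⟩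

end SqueezeSet

theorem ncard_image_le_two_mul_add_one {α β : Type*} [LinearOrder α] [LinearOrder β]
    {ρ : α → β} (hρ : Monotone ρ) {A B : Set α} (hB : (ρ '' B).Finite)
    (hgap : ∀ x ∈ A, x ∉ B → ∀ y ∈ A, x < y → ∃ ξ ∈ B, x < ξ ∧ ∀ z ∈ A, x < z → ξ < z) :
    (ρ '' A).ncard ≤ 2 * (ρ '' B).ncard + 1 := by
  set E := {x ∈ A | ρ x ∉ ρ '' B ∧ ∃ y ∈ A, x < y}
  set S := {x ∈ A | ∀ y ∈ A, y ≤ x}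
  have hgapE : ∀ x ∈ E, ∃ ξ ∈ B, x < ξ ∧ ∀ z ∈ A, x < z → ξ < z :=
    fun x ⟨hx, hxB, y, hy, hxy⟩ => hgap x hx (fun h => hxB (mem_image_of_mem ρ h)) y hy hxy
  choose! ξ hξB hxξ hξA using hgapE
  have hmaps : ∀ x ∈ E, ρ (ξ x) ∈ ρ '' B := fun x hx => mem_image_of_mem ρ (hξB x hx)
  -- `ξ x` precedes every later point `x'` of `A`, so if `ξ x` and `ξ x'` share a cell,
  -- then so do `x'` and `ξ x'`, which is excluded for `x' ∈ E`
  have hnot_lt : ∀ x ∈ E, ∀ x' ∈ E, ρ (ξ x) = ρ (ξ x') → ¬x < x' := by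
    intro x hx x' hx' heq hxx'
    have h₁ : ρ (ξ x) ≤ ρ x' := hρ (hξA x hx x' hx'.1 hxx').le
    have h₂ : ρ x' ≤ ρ (ξ x') := hρ (hxξ x' hx').le
    exact hx'.2.1 (le_antisymm h₂ (heq ▸ h₁) ▸ hmaps x' hx')
  have hinj : InjOn (ρ ∘ ξ) E := fun x hx x' hx' heq =>
    le_antisymm (not_lt.1 (hnot_lt x' hx' x hx heq.symm)) (not_lt.1 (hnot_lt x hx x' hx' heq))
  have hE : E.ncard ≤ (ρ '' B).ncard := ncard_le_ncard_of_injOn _ hmaps hinj hB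
  have hEfin : E.Finite := (hB.subset (image_subset_iff.2 hmaps)).of_finite_image hinj
  have hS : (ρ '' S).Subsingleton :=
    Subsingleton.image (fun x hx y hy => le_antisymm (hy.2 x hx.1) (hx.2 y hy.1)) ρ
  have hcover : ρ '' A ⊆ (ρ '' B ∪ ρ '' E) ∪ ρ '' S := by
    rintro _ ⟨x, hx, rfl⟩
    by_cases hxB : ρ x ∈ ρ '' B
    · exact Or.inl (Or.inl hxB)
    by_cases hmax : ∃ y ∈ A, x < y
    · exact Or.inl (Or.inr ⟨x, ⟨hx, hxB, hmax⟩, rfl⟩)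
    push Not at hmax
    exact Or.inr ⟨x, ⟨hx, hmax⟩, rfl⟩
  calc (ρ '' A).ncard ≤ ((ρ '' B ∪ ρ '' E) ∪ ρ '' S).ncard :=
        ncard_le_ncard hcover ((hB.union (hEfin.image ρ)).union hS.finite)
    _ ≤ (ρ '' B).ncard + (ρ '' E).ncard + (ρ '' S).ncard := by
        grw [ncard_union_le, ncard_union_le]
    _ ≤ 2 * (ρ '' B).ncard + 1 := by
        have := ncard_image_le (f := ρ) hEfin
        have := (ncard_le_one hS.finite).2 fun a ha b hb => hS ha hb
        omega

-- `x` lies in the grid interval of index `gridIndex ℓ x`, and possibly also in the next one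
noncomputable def gridIndex (ℓ : ℕ) (x : ℝ) : ℤ := ⌈x * 2 ^ ℓ⌉

def gridCells (ℓ : ℕ) (A : Set ℝ) : Set ℤ :=
  {j : ℤ | (A ∩ Icc (((j : ℝ) - 1) / 2 ^ ℓ) ((j : ℝ) / 2 ^ ℓ)).Nonempty}

theorem gridCount_eq_ncard (ℓ : ℕ) (A : Set ℝ) : gridCount ℓ A = (gridCells ℓ A).ncard := rfl

theorem gridIndex_mono (ℓ : ℕ) : Monotone (gridIndex ℓ) := fun _ _ h =>
  Int.ceil_mono (by gcongr)

theorem mem_gridCell_iff {ℓ : ℕ} {j : ℤ} {x : ℝ} :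
    x ∈ Icc (((j : ℝ) - 1) / 2 ^ ℓ) ((j : ℝ) / 2 ^ ℓ) ↔
      (j : ℝ) - 1 ≤ x * 2 ^ ℓ ∧ x * 2 ^ ℓ ≤ j := by
  rw [mem_Icc, div_le_iff₀ (by positivity), le_div_iff₀ (by positivity)]

theorem gridIndex_mem_gridCells {ℓ : ℕ} {A : Set ℝ} {x : ℝ} (hx : x ∈ A) :
    gridIndex ℓ x ∈ gridCells ℓ A :=
  ⟨x, hx, mem_gridCell_iff.2 ⟨sub_le_iff_le_add.2 (Int.ceil_lt_add_one _).le, Int.le_ceil _⟩⟩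

theorem gridCells_subset (ℓ : ℕ) (A : Set ℝ) :
    gridCells ℓ A ⊆ gridIndex ℓ '' A ∪ (· + 1) '' (gridIndex ℓ '' A) := by
  rintro j ⟨x, hx, hxj⟩
  obtain ⟨h₁, h₂⟩ := mem_gridCell_iff.1 hxj
  have hle : gridIndex ℓ x ≤ j := Int.ceil_le.2 h₂
  have hge : j - 1 ≤ gridIndex ℓ x := by
    exact_mod_cast (show ((j - 1 : ℤ) : ℝ) ≤ gridIndex ℓ x by
      push_cast; exact h₁.trans (Int.le_ceil _))
  rcases hle.eq_or_lt with h | h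
  · exact Or.inl ⟨x, hx, h⟩
  · exact Or.inr ⟨_, ⟨x, hx, rfl⟩, show gridIndex ℓ x + 1 = j by omega⟩

theorem gridIndex_image_subset {ℓ : ℕ} {A : Set ℝ} (hA : A ⊆ Icc 0 1) :
    gridIndex ℓ '' A ⊆ Icc 0 (2 ^ ℓ) := by
  rintro _ ⟨x, hx, rfl⟩
  have h₀ : 0 ≤ x * 2 ^ ℓ := mul_nonneg (hA hx).1 (by positivity)
  have h₁ : x * 2 ^ ℓ ≤ 2 ^ ℓ := mul_le_of_le_one_left (by positivity) (hA hx).2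
  exact ⟨Int.ceil_nonneg h₀, Int.ceil_le.2 (by exact_mod_cast h₁)⟩

theorem finite_gridIndex_image {ℓ : ℕ} {A : Set ℝ} (hA : A ⊆ Icc 0 1) :
    (gridIndex ℓ '' A).Finite :=
  (finite_Icc _ _).subset (gridIndex_image_subset hA)

theorem finite_gridCells {ℓ : ℕ} {A : Set ℝ} (hA : A ⊆ Icc 0 1) : (gridCells ℓ A).Finite :=
  ((finite_gridIndex_image hA).union ((finite_gridIndex_image hA).image _)).subset
    (gridCells_subset ℓ A)

theorem gridCount_le_two_mul_ncard {ℓ : ℕ} {A : Set ℝ} (hA : A ⊆ Icc 0 1) :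
    gridCount ℓ A ≤ 2 * (gridIndex ℓ '' A).ncard := by
  have hfin := finite_gridIndex_image (ℓ := ℓ) hA
  rw [gridCount_eq_ncard]
  calc (gridCells ℓ A).ncard ≤ (gridIndex ℓ '' A ∪ (· + 1) '' (gridIndex ℓ '' A)).ncard :=
        ncard_le_ncard (gridCells_subset ℓ A) (hfin.union (hfin.image _))
    _ ≤ 2 * (gridIndex ℓ '' A).ncard := by
        grw [ncard_union_le, ncard_image_le hfin]
        omega

theorem ncard_le_gridCount {ℓ : ℕ} {A : Set ℝ} (hA : A ⊆ Icc 0 1) :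
    (gridIndex ℓ '' A).ncard ≤ gridCount ℓ A := by
  rw [gridCount_eq_ncard]
  exact ncard_le_ncard (image_subset_iff.2 fun _ hx => gridIndex_mem_gridCells hx)
    (finite_gridCells hA)

theorem gridCount_le_two_pow {ℓ : ℕ} {A : Set ℝ} (hA : A ⊆ Icc 0 1) :
    gridCount ℓ A ≤ 2 ^ (ℓ + 2) := by
  have h : (gridIndex ℓ '' A).ncard ≤ 2 ^ ℓ + 1 := by
    refine (ncard_le_ncard (gridIndex_image_subset hA) (finite_Icc _ _)).trans_eq ?_
    rw [← Finset.coe_Icc, ncard_coe_finset, Int.card_Icc, sub_zero,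
      show (2 : ℤ) ^ ℓ + 1 = ((2 ^ ℓ + 1 : ℕ) : ℤ) by push_cast; rfl, Int.toNat_natCast]
  have := gridCount_le_two_mul_ncard (ℓ := ℓ) hA
  have := Nat.one_le_two_pow (n := ℓ)
  rw [pow_succ, pow_succ]
  omega

theorem gridCount_le_of_forall_gap {A B : Set ℝ} (hA : A ⊆ Icc 0 1) (hB : B ⊆ Icc 0 1)
    (hgap : ∀ x ∈ A, x ∉ B → ∀ y ∈ A, x < y → ∃ ξ ∈ B, x < ξ ∧ ∀ z ∈ A, x < z → ξ < z)
    (ℓ : ℕ) : gridCount ℓ A ≤ 4 * gridCount ℓ B + 2 := by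
  have := ncard_image_le_two_mul_add_one (gridIndex_mono ℓ) (finite_gridIndex_image hB) hgap
  have := gridCount_le_two_mul_ncard (ℓ := ℓ) hA
  have := ncard_le_gridCount (ℓ := ℓ) hB
  omega

section LiminfLimsup

variable {ι : Type*} {l : Filter ι} [l.NeBot] {u v w : ι → ℝ}

theorem liminf_le_liminf_of_le_add (h : ∀ᶠ i in l, u i ≤ w i + v i) (hw : Tendsto w l (𝓝 0))
    (hu : IsBoundedUnder (· ≥ ·) l u) (hv₀ : IsBoundedUnder (· ≥ ·) l v)
    (hv₁ : IsBoundedUnder (· ≤ ·) l v) : liminf u l ≤ liminf v l :=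
  calc liminf u l ≤ liminf (w + v) l :=
        liminf_le_liminf h hu (isBoundedUnder_le_add hw.isBoundedUnder_le hv₁).isCoboundedUnder_ge
    _ ≤ limsup w l + liminf v l :=
        liminf_add_le hw.isBoundedUnder_ge hw.isBoundedUnder_le hv₀ hv₁.isCoboundedUnder_ge
    _ = liminf v l := by rw [hw.limsup_eq, zero_add]

theorem limsup_le_limsup_of_le_add (h : ∀ᶠ i in l, u i ≤ w i + v i) (hw : Tendsto w l (𝓝 0))
    (hu : IsBoundedUnder (· ≥ ·) l u) (hv₀ : IsBoundedUnder (· ≥ ·) l v)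
    (hv₁ : IsBoundedUnder (· ≤ ·) l v) : limsup u l ≤ limsup v l :=
  calc limsup u l ≤ limsup (w + v) l :=
        limsup_le_limsup h hu.isCoboundedUnder_le (isBoundedUnder_le_add hw.isBoundedUnder_le hv₁)
    _ ≤ limsup w l + limsup v l :=
        limsup_add_le hw.isBoundedUnder_ge hw.isBoundedUnder_le hv₀.isCoboundedUnder_le hv₁
    _ = limsup v l := by rw [hw.limsup_eq, zero_add]

end LiminfLimsup

theorem log_natCast_le_log_natCast {m n : ℕ} (h : m ≤ n) : Real.log m ≤ Real.log n := by
  rcases m.eq_zero_or_pos with rfl | hm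
  · simpa using Real.log_natCast_nonneg n
  · exact Real.log_le_log (by exact_mod_cast hm) (by exact_mod_cast h)

theorem log_natCast_le_add_of_le_mul_add {N C M D : ℕ} (h : N ≤ C * M + D) :
    Real.log N ≤ Real.log (C + D : ℕ) + Real.log M := by
  rcases M.eq_zero_or_pos with rfl | hM
  · simpa using log_natCast_le_log_natCast (by omega : N ≤ C + D)
  have hCD : N ≤ (C + D) * M := h.trans (by nlinarith)
  rcases (C + D).eq_zero_or_pos with hCD0 | hCD0
  · simp_all [Real.log_natCast_nonneg]
  rw [← Real.log_mul (by positivity) (by positivity), ← Nat.cast_mul]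
  exact log_natCast_le_log_natCast hCD

noncomputable def gridExponent (A : Set ℝ) (ℓ : ℕ) : ℝ :=
  Real.log (gridCount ℓ A) / (ℓ * Real.log 2)

theorem gridExponent_nonneg (A : Set ℝ) (ℓ : ℕ) : 0 ≤ gridExponent A ℓ :=
  div_nonneg (Real.log_natCast_nonneg _) (by positivity)

theorem gridExponent_le_three {A : Set ℝ} (hA : A ⊆ Icc 0 1) (ℓ : ℕ) : gridExponent A ℓ ≤ 3 := by
  rcases ℓ.eq_zero_or_pos with rfl | hℓ
  · simp [gridExponent]
  have hlog : Real.log (gridCount ℓ A) ≤ (ℓ + 2) * Real.log 2 := by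
    simpa [Real.log_pow] using log_natCast_le_log_natCast (gridCount_le_two_pow (ℓ := ℓ) hA)
  have hℓ' : (1 : ℝ) ≤ ℓ := by exact_mod_cast hℓ
  rw [gridExponent, div_le_iff₀ (by positivity)]
  nlinarith [Real.log_pos one_lt_two]

theorem gridExponent_le_add {A B : Set ℝ} {C D ℓ : ℕ}
    (h : gridCount ℓ A ≤ C * gridCount ℓ B + D) :
    gridExponent A ℓ ≤ Real.log (C + D : ℕ) / (ℓ * Real.log 2) + gridExponent B ℓ := by
  rw [gridExponent, gridExponent, ← add_div]
  exact div_le_div_of_nonneg_right (log_natCast_le_add_of_le_mul_add h) (by positivity)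

theorem minkowskiDim_le_of_gridCount_le {A B : Set ℝ} (hB : B ⊆ Icc 0 1) (C D : ℕ)
    (h : ∀ ℓ, gridCount ℓ A ≤ C * gridCount ℓ B + D) :
    lowerMinkowskiDim A ≤ lowerMinkowskiDim B ∧ upperMinkowskiDim A ≤ upperMinkowskiDim B := by
  have hle : ∀ᶠ ℓ in atTop,
      gridExponent A ℓ ≤ Real.log (C + D : ℕ) / (ℓ * Real.log 2) + gridExponent B ℓ :=
    Eventually.of_forall fun ℓ => gridExponent_le_add (h ℓ)
  have hw : Tendsto (fun ℓ : ℕ => Real.log (C + D : ℕ) / (ℓ * Real.log 2)) atTop (𝓝 0) := by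
    simpa only [div_mul_eq_div_div_swap] using
      tendsto_const_div_atTop_nhds_zero_nat (Real.log (C + D : ℕ) / Real.log 2)
  have hA₀ : IsBoundedUnder (· ≥ ·) atTop (gridExponent A) :=
    isBoundedUnder_of ⟨0, gridExponent_nonneg A⟩
  have hB₀ : IsBoundedUnder (· ≥ ·) atTop (gridExponent B) :=
    isBoundedUnder_of ⟨0, gridExponent_nonneg B⟩
  have hB₁ : IsBoundedUnder (· ≤ ·) atTop (gridExponent B) :=
    isBoundedUnder_of ⟨3, gridExponent_le_three hB⟩
  exact ⟨liminf_le_liminf_of_le_add hle hw hA₀ hB₀ hB₁,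
    limsup_le_limsup_of_le_add hle hw hA₀ hB₀ hB₁⟩

theorem dimH_le_of_derivedSet_subset {X : Type*} [EMetricSpace X] [SecondCountableTopology X]
    {A B : Set X} (h : derivedSet A ⊆ B) : dimH A ≤ dimH B := by
  obtain ⟨V, D, hV, hD, hVD⟩ :=
    exists_countable_union_perfect_of_isClosed (isClosed_closure (s := A))
  have hDB : D ⊆ B := fun x hx => h <| derivedSet_closure A ▸
    derivedSet_mono _ _ (hVD ▸ subset_union_right) (hD.acc x hx)
  calc dimH A ≤ dimH (closure A) := dimH_mono subset_closure
    _ = max (dimH V) (dimH D) := by rw [hVD, dimH_union]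
    _ ≤ dimH B := max_le (hV.dimH_zero ▸ zero_le) (dimH_mono hDB)

theorem convex_restriction_gives_monotone_deriv_restriction_general
    (f f' : ℝ → ℝ)
    (hderiv : ∀ x ∈ Icc (0:ℝ) 1, HasDerivWithinAt f (f' x) (Icc 0 1) x)
    (A : Set ℝ) (hA : A ⊆ Icc (0:ℝ) 1)
    (hconv : ∀ x₁ ∈ A, ∀ x₂ ∈ A, ∀ x₃ ∈ A, x₁ < x₂ → x₂ < x₃ →
      0 ≤ ((f x₃ - f x₂) / (x₃ - x₂) - (f x₂ - f x₁) / (x₂ - x₁)) / (x₃ - x₁)) :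
    ∃ B ⊆ Icc (0:ℝ) 1, MonotoneOn f' B ∧
      dimH A ≤ dimH B ∧
      lowerMinkowskiDim A ≤ lowerMinkowskiDim B ∧
      upperMinkowskiDim A ≤ upperMinkowskiDim B := by
  have hKI : closure A ⊆ Icc 0 1 := closure_minimal hA isClosed_Icc
  have hK : SlopeMonotoneOn f (closure A) :=
    (SlopeMonotoneOn.of_secondDividedDiff_nonneg hconv).closure
      fun z hz => (hderiv z (hKI hz)).continuousWithinAt.mono hKI
  set B := slopeSqueezeSet f f' (closure A)
  have hBI : B ⊆ Icc 0 1 := slopeSqueezeSet_subset_Icc hKI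
  have hgap : ∀ x ∈ A, x ∉ B → ∀ y ∈ A, x < y → ∃ ξ ∈ B, x < ξ ∧ ∀ z ∈ A, x < z → ξ < z := by
    intro x hx hxB y hy hxy
    obtain ⟨ξ, hξ, hxξ, hξK⟩ := exists_mem_slopeSqueezeSet_right hderiv isClosed_closure hKI hK
      (subset_closure hx) (subset_closure hy) hxy hxB
    exact ⟨ξ, hξ, hxξ, fun z hz => hξK z (subset_closure hz)⟩
  have hderivedSet : derivedSet A ⊆ B := fun x hx => by
    have hxK := derivedSet_subset_closure A hx
    exact hK.mem_slopeSqueezeSet hxK (hx.mono (principal_mono.2 subset_closure))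
      ((hderiv x (hKI hxK)).mono hKI)
  exact ⟨B, hBI, monotoneOn_slopeSqueezeSet, dimH_le_of_derivedSet_subset hderivedSet,
    minkowskiDim_le_of_gridCount_le hBI 4 2 (gridCount_le_of_forall_gap hA hBI hgap)⟩

theorem convex_restriction_gives_monotone_deriv_restriction
    (f f' : ℝ → ℝ)
    (hderiv : ∀ x ∈ Icc (0:ℝ) 1, HasDerivWithinAt f (f' x) (Icc 0 1) x)
    (hcont : ContinuousOn f' (Icc 0 1))
    (A : Set ℝ) (hA : A ⊆ Icc (0:ℝ) 1)
    (hconv : ∀ x₁ ∈ A, ∀ x₂ ∈ A, ∀ x₃ ∈ A, x₁ < x₂ → x₂ < x₃ →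
      0 ≤ ((f x₃ - f x₂) / (x₃ - x₂) - (f x₂ - f x₁) / (x₂ - x₁)) / (x₃ - x₁)) :
    ∃ B ⊆ Icc (0:ℝ) 1, MonotoneOn f' B ∧
      dimH A ≤ dimH B ∧
      lowerMinkowskiDim A ≤ lowerMinkowskiDim B ∧
      upperMinkowskiDim A ≤ upperMinkowskiDim B :=
  convex_restriction_gives_monotone_deriv_restriction_general f f' hderiv A hA hconv
end

section
/- Let f ∈ C¹[0,1], let A ⊆ [0,1] be a closed set on which f is convex, and let h be the continuous function on the convex hull interval I_A of A that agrees with f on A and is affine on intervals contiguous to A. Then h is convex on I_A, and at every two-sided accumulation point a of A, h is differentiable with h'(a) = f'(a). -/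
open Set

/-- Algebraic "three slopes" lemma: if the slope on `[s,t]` is at most the slope on `[t,r]`,
then the slope on `[s,r]` lies between them. -/
private lemma slope_trichotomy {g : ℝ → ℝ} {s t r : ℝ} (h1 : s < t) (h2 : t < r)
    (hle : (g t - g s) / (t - s) ≤ (g r - g t) / (r - t)) :
    (g t - g s) / (t - s) ≤ (g r - g s) / (r - s) ∧
      (g r - g s) / (r - s) ≤ (g r - g t) / (r - t) := by
  have h1' : (0:ℝ) < t - s := by linarith
  have h2' : (0:ℝ) < r - t := by linarith
  have h3' : (0:ℝ) < r - s := by linarith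
  rw [div_le_div_iff₀ h1' h2'] at hle
  constructor
  · rw [div_le_div_iff₀ h1' h3']; nlinarith
  · rw [div_le_div_iff₀ h3' h2']; nlinarith

theorem affine_extension_convex_and_differentiable
    (f f' : ℝ → ℝ)
    (hderiv : ∀ x ∈ Icc (0:ℝ) 1, HasDerivWithinAt f (f' x) (Icc 0 1) x)
    (hcont : ContinuousOn f' (Icc 0 1))
    (A : Set ℝ) (hA : A ⊆ Icc (0:ℝ) 1) (hAne : A.Nonempty) (hAcl : IsClosed A)
    (hconv : ∀ x₁ ∈ A, ∀ x₂ ∈ A, ∀ x₃ ∈ A, x₁ < x₂ → x₂ < x₃ →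
      0 ≤ ((f x₃ - f x₂) / (x₃ - x₂) - (f x₂ - f x₁) / (x₂ - x₁)) / (x₃ - x₁))
    (h : ℝ → ℝ)
    (hcontI : ContinuousOn h (Icc (sInf A) (sSup A)))
    (hagree : ∀ x ∈ A, h x = f x)
    (haffine : ∀ x₁ ∈ A, ∀ x₂ ∈ A, x₁ < x₂ → Ioo x₁ x₂ ∩ A = ∅ →
      ∀ x ∈ Ioo x₁ x₂, h x = f x₁ + (f x₂ - f x₁) / (x₂ - x₁) * (x - x₁)) :
    ConvexOn ℝ (Icc (sInf A) (sSup A)) h ∧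
      ∀ a ∈ A, ClusterPt a (Filter.principal (A ∩ Iio a)) →
        ClusterPt a (Filter.principal (A ∩ Ioi a)) →
        HasDerivWithinAt h (f' a) (Icc (sInf A) (sSup A)) a := by
  have hbddB : BddBelow A := ⟨0, fun x hx => (hA hx).1⟩
  have hbddA : BddAbove A := ⟨1, fun x hx => (hA hx).2⟩
  have hmA : sInf A ∈ A := hAcl.csInf_mem hAne hbddB
  have hMA : sSup A ∈ A := hAcl.csSup_mem hAne hbddA
  have hAI : A ⊆ Icc (sInf A) (sSup A) := fun x hx => ⟨csInf_le hbddB hx, le_csSup hbddA hx⟩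
  -- monotonicity of slopes of f on A
  have sfle : ∀ u ∈ A, ∀ v ∈ A, ∀ w ∈ A, u < v → v < w →
      (f v - f u) / (v - u) ≤ (f w - f v) / (w - v) := by
    intro u hu v hv w hw huv hvw
    have h0 := hconv u hu v hv w hw huv hvw
    have hwu : (0:ℝ) < w - u := by linarith
    have hD := mul_nonneg h0 hwu.le
    rw [div_mul_cancel₀ _ (ne_of_gt hwu)] at hD
    linarith
  -- structure of gaps
  have gap : ∀ x ∈ Icc (sInf A) (sSup A), x ∉ A →
      ∃ a b, a ∈ A ∧ b ∈ A ∧ a < x ∧ x < b ∧ Ioo a b ∩ A = ∅ ∧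
        (∀ t ∈ A, t ≤ x → t ≤ a) ∧ (∀ t ∈ A, x ≤ t → b ≤ t) := by
    intro x hx hxA
    have hne1 : (A ∩ Iic x).Nonempty := ⟨sInf A, hmA, hx.1⟩
    have hne2 : (A ∩ Ici x).Nonempty := ⟨sSup A, hMA, hx.2⟩
    have hbdd1 : BddAbove (A ∩ Iic x) := ⟨x, fun t ht => ht.2⟩
    have hbdd2 : BddBelow (A ∩ Ici x) := ⟨x, fun t ht => ht.2⟩
    have haA : sSup (A ∩ Iic x) ∈ A ∩ Iic x :=
      (hAcl.inter isClosed_Iic).csSup_mem hne1 hbdd1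
    have hbA : sInf (A ∩ Ici x) ∈ A ∩ Ici x :=
      (hAcl.inter isClosed_Ici).csInf_mem hne2 hbdd2
    refine ⟨sSup (A ∩ Iic x), sInf (A ∩ Ici x), haA.1, hbA.1,
      lt_of_le_of_ne haA.2 (fun e => hxA (e ▸ haA.1)), ?_, ?_, ?_, ?_⟩
    · exact lt_of_le_of_ne hbA.2 (fun e => hxA (e ▸ hbA.1))
    · ext t
      simp only [mem_inter_iff, mem_Ioo, mem_empty_iff_false, iff_false, not_and]
      intro ht htA
      rcases le_total t x with hle | hle
      · exact absurd (le_csSup hbdd1 ⟨htA, hle⟩) (not_le.mpr ht.1)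
      · exact absurd (csInf_le hbdd2 ⟨htA, hle⟩) (not_le.mpr ht.2)
    · exact fun t ht hle => le_csSup hbdd1 ⟨ht, hle⟩
    · exact fun t ht hle => csInf_le hbdd2 ⟨ht, hle⟩
  -- value of h on a closed gap
  have hgapval : ∀ a ∈ A, ∀ b ∈ A, a < b → Ioo a b ∩ A = ∅ →
      ∀ x ∈ Icc a b, h x = f a + (f b - f a) / (b - a) * (x - a) := by
    intro a ha b hb hab hgapE x hx
    rcases eq_or_lt_of_le hx.1 with h1 | h1
    · rw [← h1, hagree a ha]; ring
    rcases eq_or_lt_of_le hx.2 with h2 | h2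
    · rw [h2, hagree b hb, div_mul_cancel₀ _ (by intro e; apply absurd (sub_eq_zero.mp e) (ne_of_gt hab) : b - a ≠ 0)]
      ring
    · exact haffine a ha b hb hab hgapE x ⟨h1, h2⟩
  -- slope of h on a closed gap
  have hgapslope : ∀ a ∈ A, ∀ b ∈ A, a < b → Ioo a b ∩ A = ∅ →
      ∀ s ∈ Icc a b, ∀ t ∈ Icc a b, s < t →
        (h t - h s) / (t - s) = (f b - f a) / (b - a) := by
    intro a ha b hb hab hgapE s hs t ht hst
    rw [hgapval a ha b hb hab hgapE s hs, hgapval a ha b hb hab hgapE t ht]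
    have h1 : t - s ≠ 0 := ne_of_gt (by linarith)
    have h2 : b - a ≠ 0 := ne_of_gt (by linarith)
    field_simp
    ring
  -- slope of h between points of A
  have shA : ∀ u ∈ A, ∀ v ∈ A, (h v - h u) / (v - u) = (f v - f u) / (v - u) := by
    intro u hu v hv; rw [hagree u hu, hagree v hv]
  -- upper bound lemma
  have UB : ∀ x ∈ Icc (sInf A) (sSup A), ∀ y ∈ A, ∀ w ∈ A, x < y → y < w →
      (h y - h x) / (y - x) ≤ (f w - f y) / (w - y) := by
    intro x hx y hy w hw hxy hyw
    by_cases hxA : x ∈ A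
    · rw [shA x hxA y hy]; exact sfle x hxA y hy w hw hxy hyw
    · obtain ⟨a, b, haA, hbA, hax, hxb, hgE, _, hminb⟩ := gap x hx hxA
      have hab : a < b := hax.trans hxb
      have hby : b ≤ y := hminb y hy hxy.le
      rcases eq_or_lt_of_le hby with hby' | hby'
      · have e1 : (h y - h x) / (y - x) = (f b - f a) / (b - a) :=
          hgapslope a haA b hbA hab hgE x ⟨hax.le, hxb.le⟩ y ⟨hab.le.trans hby, hby'.ge⟩ hxy
        rw [e1, ← hby']
        exact sfle a haA b hbA w hw hab (lt_of_le_of_lt hby hyw)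
      · have s1 : (h b - h x) / (b - x) = (f b - f a) / (b - a) :=
          hgapslope a haA b hbA hab hgE x ⟨hax.le, hxb.le⟩ b ⟨hab.le, le_rfl⟩ hxb
        have s2 : (h y - h b) / (y - b) = (f y - f b) / (y - b) := shA b hbA y hy
        have hle : (h b - h x) / (b - x) ≤ (h y - h b) / (y - b) := by
          rw [s1, s2]; exact sfle a haA b hbA y hy hab hby'
        have := (slope_trichotomy hxb hby' hle).1
        calc (h y - h x) / (y - x) ≤ (h y - h b) / (y - b) :=
              ((slope_trichotomy hxb hby' hle).2)
          _ = (f y - f b) / (y - b) := s2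
          _ ≤ (f w - f y) / (w - y) := sfle b hbA y hy w hw hby' hyw
  -- lower bound lemma
  have LB : ∀ u ∈ A, ∀ b ∈ A, ∀ z ∈ Icc (sInf A) (sSup A), u < b → b < z →
      (f b - f u) / (b - u) ≤ (h z - h b) / (z - b) := by
    intro u hu b hb z hz hub hbz
    by_cases hzA : z ∈ A
    · rw [shA b hb z hzA]; exact sfle u hu b hb z hzA hub hbz
    · obtain ⟨c, d, hcA, hdA, hcz, hzd, hgE, hmaxc, _⟩ := gap z hz hzA
      have hcd : c < d := hcz.trans hzd
      have hbc : b ≤ c := hmaxc b hb hbz.le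
      rcases eq_or_lt_of_le hbc with hbc' | hbc'
      · have e1 : (h z - h b) / (z - b) = (f d - f c) / (d - c) := by
          rw [hbc']
          exact hgapslope c hcA d hdA hcd hgE c ⟨le_rfl, hcd.le⟩ z ⟨hcz.le, hzd.le⟩ (hbc' ▸ hbz)
        rw [e1, hbc']
        exact sfle u hu c hcA d hdA (hbc' ▸ hub) hcd
      · have s1 : (h c - h b) / (c - b) = (f c - f b) / (c - b) := shA b hb c hcA
        have s2 : (h z - h c) / (z - c) = (f d - f c) / (d - c) :=
          hgapslope c hcA d hdA hcd hgE c ⟨le_rfl, hcd.le⟩ z ⟨hcz.le, hzd.le⟩ hcz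
        have hle : (h c - h b) / (c - b) ≤ (h z - h c) / (z - c) := by
          rw [s1, s2]; exact sfle b hb c hcA d hdA hbc' hcd
        calc (f b - f u) / (b - u) ≤ (f c - f b) / (c - b) := sfle u hu b hb c hcA hub hbc'
          _ = (h c - h b) / (c - b) := s1.symm
          _ ≤ (h z - h b) / (z - b) := (slope_trichotomy hbc' hcz hle).1
  -- convexity of h
  have hconvh : ConvexOn ℝ (Icc (sInf A) (sSup A)) h := by
    rw [convexOn_iff_slope_mono_adjacent]
    refine ⟨convex_Icc _ _, ?_⟩
    intro x y z hx hz hxy hyz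
    have hy : y ∈ Icc (sInf A) (sSup A) := ⟨hx.1.trans hxy.le, hyz.le.trans hz.2⟩
    by_cases hyA : y ∈ A
    · by_cases hzA : z ∈ A
      · rw [shA y hyA z hzA]; exact UB x hx y hyA z hzA hxy hyz
      · obtain ⟨c, d, hcA, hdA, hcz, hzd, hgE, hmaxc, _⟩ := gap z hz hzA
        have hcd : c < d := hcz.trans hzd
        have hyc : y ≤ c := hmaxc y hyA hyz.le
        rcases eq_or_lt_of_le hyc with hyc' | hyc'
        · have e1 : (h z - h y) / (z - y) = (f d - f c) / (d - c) := by
            rw [hyc']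
            exact hgapslope c hcA d hdA hcd hgE c ⟨le_rfl, hcd.le⟩ z ⟨hcz.le, hzd.le⟩
              (hyc' ▸ hyz)
          rw [e1]
          have := UB x hx y hyA d hdA hxy (by rw [hyc']; exact hcd)
          calc (h y - h x) / (y - x) ≤ (f d - f y) / (d - y) := this
            _ = (f d - f c) / (d - c) := by rw [hyc']
        · have s1 : (h c - h y) / (c - y) = (f c - f y) / (c - y) := shA y hyA c hcA
          have s2 : (h z - h c) / (z - c) = (f d - f c) / (d - c) :=
            hgapslope c hcA d hdA hcd hgE c ⟨le_rfl, hcd.le⟩ z ⟨hcz.le, hzd.le⟩ hcz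
          have hle : (h c - h y) / (c - y) ≤ (h z - h c) / (z - c) := by
            rw [s1, s2]; exact sfle y hyA c hcA d hdA hyc' hcd
          calc (h y - h x) / (y - x) ≤ (f c - f y) / (c - y) := UB x hx y hyA c hcA hxy hyc'
            _ = (h c - h y) / (c - y) := s1.symm
            _ ≤ (h z - h y) / (z - y) := (slope_trichotomy hyc' hcz hle).1
    · obtain ⟨a, b, haA, hbA, hay, hyb, hgE, hmaxa, hminb⟩ := gap y hy hyA
      have hab : a < b := hay.trans hyb
      have HB1 : (h y - h x) / (y - x) ≤ (f b - f a) / (b - a) := by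
        rcases le_or_gt a x with hax | hxa
        · exact le_of_eq (hgapslope a haA b hbA hab hgE x
            ⟨hax, hxy.le.trans hyb.le⟩ y ⟨hay.le, hyb.le⟩ hxy)
        · have t1 : (h a - h x) / (a - x) ≤ (f b - f a) / (b - a) :=
            UB x hx a haA b hbA hxa hab
          have t2 : (h y - h a) / (y - a) = (f b - f a) / (b - a) :=
            hgapslope a haA b hbA hab hgE a ⟨le_rfl, hab.le⟩ y ⟨hay.le, hyb.le⟩ hay
          have hle : (h a - h x) / (a - x) ≤ (h y - h a) / (y - a) := by rw [t2]; exact t1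
          have := (slope_trichotomy hxa hay hle).2
          calc (h y - h x) / (y - x) ≤ (h y - h a) / (y - a) := this
            _ = (f b - f a) / (b - a) := t2
      have HB2 : (f b - f a) / (b - a) ≤ (h z - h y) / (z - y) := by
        rcases le_or_gt z b with hzb | hbz
        · exact ge_of_eq (hgapslope a haA b hbA hab hgE y
            ⟨hay.le, hyb.le⟩ z ⟨hay.le.trans hyz.le, hzb⟩ hyz)
        · have t1 : (f b - f a) / (b - a) ≤ (h z - h b) / (z - b) :=
            LB a haA b hbA z hz hab hbz
          have t2 : (h b - h y) / (b - y) = (f b - f a) / (b - a) :=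
            hgapslope a haA b hbA hab hgE y ⟨hay.le, hyb.le⟩ b ⟨hab.le, le_rfl⟩ hyb
          have hle : (h b - h y) / (b - y) ≤ (h z - h b) / (z - b) := by rw [t2]; exact t1
          calc (f b - f a) / (b - a) = (h b - h y) / (b - y) := t2.symm
            _ ≤ (h z - h y) / (z - y) := (slope_trichotomy hyb hbz hle).1
      linarith
  refine ⟨hconvh, ?_⟩
  -- differentiability at two-sided accumulation points
  intro a haA hleft hright
  have haI : a ∈ Icc (0:ℝ) 1 := hA haA
  have haI' : a ∈ Icc (sInf A) (sSup A) := hAI haA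
  -- accumulation from both sides
  have haccL : ∀ ε > (0:ℝ), ∃ u ∈ A, a - ε < u ∧ u < a := by
    intro ε hε
    obtain ⟨u, huo, huA, hua⟩ := (clusterPt_principal_iff.mp hleft) (Ioo (a - ε) (a + ε))
      (Ioo_mem_nhds (by linarith) (by linarith))
    exact ⟨u, huA, huo.1, hua⟩
  have haccR : ∀ ε > (0:ℝ), ∃ v ∈ A, a < v ∧ v < a + ε := by
    intro ε hε
    obtain ⟨v, hvo, hvA, hva⟩ := (clusterPt_principal_iff.mp hright) (Ioo (a - ε) (a + ε))
      (Ioo_mem_nhds (by linarith) (by linarith))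
    exact ⟨v, hvA, hva, hvo.2⟩
  -- mean value theorem on A-intervals
  have mvt : ∀ s t : ℝ, s ∈ A → t ∈ A → s < t →
      ∃ ξ ∈ Ioo s t, f' ξ = (f t - f s) / (t - s) := by
    intro s t hs ht hst
    have hsI := hA hs; have htI := hA ht
    have hcf : ContinuousOn f (Icc s t) := fun z hz =>
      ((hderiv z ⟨hsI.1.trans hz.1, hz.2.trans htI.2⟩).continuousWithinAt).mono
        (fun w hw => ⟨hsI.1.trans hw.1, hw.2.trans htI.2⟩)
    have hdf : ∀ z ∈ Ioo s t, HasDerivAt f (f' z) z := by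
      intro z hz
      have hz1 : (0:ℝ) < z := lt_of_le_of_lt hsI.1 hz.1
      have hz2 : z < 1 := lt_of_lt_of_le hz.2 htI.2
      exact (hderiv z ⟨hz1.le, hz2.le⟩).hasDerivAt (Icc_mem_nhds hz1 hz2)
    exact exists_hasDerivAt_eq_slope f f' hst hcf hdf
  rw [hasDerivWithinAt_iff_tendsto_slope, Metric.tendsto_nhdsWithin_nhds]
  intro ε hε
  have hc := hcont a haI
  rw [Metric.continuousWithinAt_iff] at hc
  obtain ⟨δ, hδ, hδprop⟩ := hc ε hε
  obtain ⟨u, huA, hu1, hu2⟩ := haccL δ hδ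
  obtain ⟨v, hvA, hv1, hv2⟩ := haccR δ hδ
  obtain ⟨ξ₁, hξ₁, e₁⟩ := mvt u a huA haA hu2
  obtain ⟨ξ₂, hξ₂, e₂⟩ := mvt a v haA hvA hv1
  have huI := hA huA; have hvI := hA hvA
  have b₁ : dist (f' ξ₁) (f' a) < ε := by
    apply hδprop ⟨huI.1.trans hξ₁.1.le, hξ₁.2.le.trans haI.2⟩
    rw [Real.dist_eq, abs_lt]
    constructor <;> [linarith [hξ₁.1]; linarith [hξ₁.2]]
  have b₂ : dist (f' ξ₂) (f' a) < ε := by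
    apply hδprop ⟨haI.1.trans hξ₂.1.le, hξ₂.2.le.trans hvI.2⟩
    rw [Real.dist_eq, abs_lt]
    constructor <;> [linarith [hξ₂.1]; linarith [hξ₂.2]]
  rw [Real.dist_eq, abs_lt] at b₁ b₂
  have huI' : u ∈ Icc (sInf A) (sSup A) := hAI huA
  have hvI' : v ∈ Icc (sInf A) (sSup A) := hAI hvA
  have sua : (h a - h u) / (a - u) = f' ξ₁ := by rw [shA u huA a haA, e₁]
  have sav : (h v - h a) / (v - a) = f' ξ₂ := by rw [shA a haA v hvA, e₂]
  refine ⟨min (a - u) (v - a), by simp [hu2, hv1, sub_pos], ?_⟩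
  intro x hx hdist
  have hxI : x ∈ Icc (sInf A) (sSup A) := hx.1
  have hxa : x ≠ a := by simpa using hx.2
  rw [Real.dist_eq] at hdist
  have hd1 : |x - a| < a - u := lt_of_lt_of_le hdist (min_le_left _ _)
  have hd2 : |x - a| < v - a := lt_of_lt_of_le hdist (min_le_right _ _)
  rw [abs_lt] at hd1 hd2
  rw [slope_def_field, Real.dist_eq, abs_lt]
  rcases hxa.lt_or_gt with hlt | hlt
  · -- x < a
    have hux : u < x := by linarith [hd1.1]
    have lo : (h a - h u) / (a - u) ≤ (h a - h x) / (a - x) := by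
      have hle := hconvh.slope_mono_adjacent huI' haI' hux hlt
      exact (slope_trichotomy hux hlt hle).2
    have hi : (h a - h x) / (a - x) ≤ (h v - h a) / (v - a) :=
      hconvh.slope_mono_adjacent hxI hvI' hlt (by linarith [hd2.2] : a < v)
    have ee : (h x - h a) / (x - a) = (h a - h x) / (a - x) := by
      rw [← neg_sub (h a) (h x), ← neg_sub a x, neg_div_neg_eq]
    rw [ee]
    have l1 : f' ξ₁ ≤ (h a - h x) / (a - x) := sua ▸ lo
    have l2 : (h a - h x) / (a - x) ≤ f' ξ₂ := sav ▸ hi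
    exact ⟨by linarith [b₁.1], by linarith [b₂.2]⟩
  · -- a < x
    have hxv : x < v := by linarith [hd2.2]
    have lo : (h a - h u) / (a - u) ≤ (h x - h a) / (x - a) :=
      hconvh.slope_mono_adjacent huI' hxI hu2 hlt
    have hi : (h x - h a) / (x - a) ≤ (h v - h a) / (v - a) := by
      have hle := hconvh.slope_mono_adjacent haI' hvI' hlt hxv
      exact (slope_trichotomy hlt hxv hle).1
    constructor
    · have : f' ξ₁ ≤ (h x - h a) / (x - a) := sua ▸ lo
      linarith [b₁.1]
    · have : (h x - h a) / (x - a) ≤ f' ξ₂ := sav ▸ hi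
      linarith [b₂.2]
end

section
/- Let f₀ : [a,b] → ℝ be a quadratic f₀(x) = (ξ/2)x² + px + q with ξ > 0, and let f : [a,b] → ℝ satisfy |f(x) − f₀(x)| < δ for all x. If x₁ < x₃ are points of [a,b] such that f restricted to {x₁, (x₁+x₃)/2, x₃} lies on a line (or more generally the midpoint value of the convex minorant equals the average of the endpoint values), and the convex minorant g of f on [a,b] is affine on [x₁,x₃] with g(x₁)=f(x₁), g(x₃)=f(x₃), then x₃ − x₁ < 4√(δ/ξ). -/
open Set

theorem affine_piece_of_minorant_is_short (a b ξ cp cq δ : ℝ)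
    (hab : a < b) (hξ : 0 < ξ) (hδ : 0 < δ)
    (f₀ f : ℝ → ℝ)
    (hf₀ : ∀ x, f₀ x = ξ / 2 * x ^ 2 + cp * x + cq)
    (hclose : ∀ x ∈ Icc a b, |f x - f₀ x| < δ)
    (g : ℝ → ℝ)
    (hg : ∀ x ∈ Icc a b,
      g x = sInf {y : ℝ | ((x, y) : ℝ × ℝ) ∈
        convexHull ℝ {p : ℝ × ℝ | p.1 ∈ Icc a b ∧ f p.1 ≤ p.2}})
    (x₁ x₃ : ℝ) (hx₁ : x₁ ∈ Icc a b) (hx₃ : x₃ ∈ Icc a b) (h13 : x₁ < x₃)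
    (haffine : ∀ x ∈ Icc x₁ x₃, g x = g x₁ + (g x₃ - g x₁) / (x₃ - x₁) * (x - x₁))
    (hg₁ : g x₁ = f x₁) (hg₃ : g x₃ = f x₃) :
    x₃ - x₁ < 4 * Real.sqrt (δ / ξ) := by
  set m : ℝ := (x₁ + x₃) / 2 with hm_def
  have hmI : m ∈ Icc x₁ x₃ := ⟨by simp only [hm_def]; linarith, by simp only [hm_def]; linarith⟩
  have hm : m ∈ Icc a b := ⟨le_trans hx₁.1 hmI.1, le_trans hmI.2 hx₃.2⟩
  -- convexity of the shifted parabola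
  have hconv : ConvexOn ℝ univ (fun x : ℝ => ξ / 2 * x ^ 2 + cp * x + cq - δ) := by
    refine ⟨convex_univ, ?_⟩
    intro x _ y _ s t hs ht hst
    simp only [smul_eq_mul]
    have ht' : t = 1 - s := by linarith
    subst ht'
    nlinarith [mul_nonneg (mul_nonneg hs (by linarith : (0:ℝ) ≤ 1 - s)) (sq_nonneg (x - y)),
      mul_nonneg (mul_nonneg (mul_nonneg hs (by linarith : (0:ℝ) ≤ 1 - s)) (sq_nonneg (x - y))) hξ.le]
  set S : Set (ℝ × ℝ) := {p : ℝ × ℝ | p.1 ∈ Icc a b ∧ f p.1 ≤ p.2} with hS_def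
  have hsub : convexHull ℝ S ⊆ {p : ℝ × ℝ | f₀ p.1 - δ ≤ p.2} := by
    apply convexHull_min
    · rintro ⟨x, y⟩ ⟨hx, hfy⟩
      have := hclose x hx
      have h1 : f₀ x - δ < f x := by
        have := abs_lt.mp this
        linarith [this.1]
      exact le_of_lt (lt_of_lt_of_le h1 hfy)
    · have heq : {p : ℝ × ℝ | f₀ p.1 - δ ≤ p.2} =
          {p : ℝ × ℝ | p.1 ∈ univ ∧ (fun x : ℝ => ξ / 2 * x ^ 2 + cp * x + cq - δ) p.1 ≤ p.2} := by
        ext ⟨x, y⟩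
        simp only [mem_setOf_eq, mem_univ, true_and, hf₀]
      rw [heq]
      exact hconv.convex_epigraph
  have hglem : g m ≤ f m := by
    rw [hg m hm]
    apply csInf_le
    · refine ⟨f₀ m - δ, ?_⟩
      intro y hy
      exact hsub hy
    · exact subset_convexHull ℝ S ⟨hm, le_refl _⟩
  have haffm := haffine m hmI
  have hne : x₃ - x₁ ≠ 0 := by linarith
  have hgm : g m = (g x₁ + g x₃) / 2 := by
    rw [haffm]
    field_simp
    ring
  -- bounds from closeness
  have h1 := abs_lt.mp (hclose x₁ hx₁)
  have h3 := abs_lt.mp (hclose x₃ hx₃)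
  have hmcl := abs_lt.mp (hclose m hm)
  have key : ξ / 2 * ((x₃ - x₁) / 2) ^ 2 < 2 * δ := by
    have e1 := hf₀ x₁
    have e3 := hf₀ x₃
    have em := hf₀ m
    have hmid : (f x₁ + f x₃) / 2 ≤ f m := by
      rw [← hg₁, ← hg₃, ← hgm]; exact hglem
    have hmcl2 := hmcl.2
    simp only [hm_def] at em hmid hmcl2
    nlinarith [h1.1, h3.1, hmcl2]
  have hs : Real.sqrt (δ / ξ) ^ 2 = δ / ξ := Real.sq_sqrt (by positivity)
  have hspos : 0 < Real.sqrt (δ / ξ) := Real.sqrt_pos.mpr (by positivity)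
  have hd2 : (x₃ - x₁) ^ 2 * ξ < 16 * δ := by nlinarith [key]
  have hs2 : Real.sqrt (δ / ξ) ^ 2 * ξ = δ := by
    rw [hs]; field_simp
  have hd4 : 0 < x₃ - x₁ + 4 * Real.sqrt (δ / ξ) := by linarith
  nlinarith [hd2, hs2, mul_pos hξ hd4]
end
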